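/- arXiv:2602.00764 — 6 statements merged into one kernel-verified Lean document; each statement's English description precedes it below -/
import Mathlib

section
/- With the t-shuffle product ⧢_t on H_t = Q[t]⟨x,y⟩ defined by 1 ⧢_t w = w ⧢_t 1 = w and aw₁ ⧢_t bw₂ = a(w₁ ⧢_t bw₂) + b(aw₁ ⧢_t w₂) − δ(w₁)ρ(a)bw₂ − δ(w₂)ρ(b)aw₁ (with δ the indicator of the empty word, ρ(x)=0, ρ(y)=tx), the product ⧢_t is associative, so (H_t, ⧢_t) is a commutative Q[t]-algebra. -/
open scoped BigOperators

noncomputable section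

abbrev Rt : Type := Polynomial ℚ
abbrev Ht : Type := MonoidAlgebra Rt (FreeMonoid (Fin 2))

/-- The word `l` as an element of `H_t`. -/
def wd (l : List (Fin 2)) : Ht :=
  MonoidAlgebra.of Rt (FreeMonoid (Fin 2)) (FreeMonoid.ofList l)

/-- The letter `x`. -/
def wx : Ht := wd [0]
/-- The letter `y`. -/
def wy : Ht := wd [1]

/-- ρ(x) = 0, ρ(y) = t·x. -/
def ρt : Fin 2 → Ht := fun a => if a = 1 then (Polynomial.X : Rt) • wx else 0

/-- δ: indicator of the empty word. -/
def δw : List (Fin 2) → Rt := fun w => if w = [] then 1 else 0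

/-- The t-shuffle product on words. -/
def tshW : List (Fin 2) → List (Fin 2) → Ht
  | [], w => wd w
  | a :: w, [] => wd (a :: w)
  | a :: w1, b :: w2 =>
      wd [a] * tshW w1 (b :: w2) + wd [b] * tshW (a :: w1) w2
        - δw w1 • (ρt a * wd (b :: w2)) - δw w2 • (ρt b * wd (a :: w1))
  termination_by w1 w2 => w1.length + w2.length

/-- The ordinary shuffle product (t = 0 case) on words. -/
def shW : List (Fin 2) → List (Fin 2) → Ht
  | [], w => wd w
  | a :: w, [] => wd (a :: w)
  | a :: w1, b :: w2 =>
      wd [a] * shW w1 (b :: w2) + wd [b] * shW (a :: w1) w2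
  termination_by w1 w2 => w1.length + w2.length

/-- The t-shuffle product on `H_t`, extended Q[t]-bilinearly. -/
def tshH (u v : Ht) : Ht :=
  u.coeff.sum fun w1 c1 => v.coeff.sum fun w2 c2 =>
    (c1 * c2) • tshW (FreeMonoid.toList w1) (FreeMonoid.toList w2)

/-- The ordinary shuffle product on `H_t`, extended Q[t]-bilinearly. -/
def shH (u v : Ht) : Ht :=
  u.coeff.sum fun w1 c1 => v.coeff.sum fun w2 c2 =>
    (c1 * c2) • shW (FreeMonoid.toList w1) (FreeMonoid.toList w2)

/-!
The word recursion extends bilinearly: for arbitrary `u, v` and letters `a, b`,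
`a u ⧢ b v = a (u ⧢ b v) + b (a u ⧢ v) - ε(u) ρ(a) b v - ε(v) ρ(b) a u`,
where `ε = constTerm` is the constant term. Since `ρ(a)` is a multiple of `x` and `ρ(x) = 0`,
the same recursion holds with `ρ(a)` in place of the leading letter `a`, except that its
`ε(u)` correction vanishes. Expanding `(a w₁ ⧢ b w₂) ⧢ c w₃` and `a w₁ ⧢ (b w₂ ⧢ c w₃)` in this way
gives in both cases three terms `letter * (shorter triple product)` and the same three
corrections `δ(w₁) ρ(a) (b w₂ ⧢ c w₃)`, …, so associativity follows by induction on the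
total length.
-/

open MonoidAlgebra

lemma wd_cons (a : Fin 2) (l : List (Fin 2)) : wd (a :: l) = wd [a] * wd l := by
  simp [wd]

lemma wd_toList (w : FreeMonoid (Fin 2)) : wd w.toList = single w 1 := by
  rw [wd, of_apply, FreeMonoid.ofList_toList]

lemma δw_cons (a : Fin 2) (l : List (Fin 2)) : δw (a :: l) = 0 := rfl

lemma ρt_zero : ρt 0 = 0 := by simp [ρt]

lemma ρt_one : ρt 1 = (Polynomial.X : Rt) • wd [0] := by simp [ρt, wx]

lemma tshW_nil_left (w : List (Fin 2)) : tshW [] w = wd w := by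
  rw [tshW]

lemma tshW_nil_right (w : List (Fin 2)) : tshW w [] = wd w := by
  cases w <;> rw [tshW]

lemma tshW_cons_cons (a b : Fin 2) (w₁ w₂ : List (Fin 2)) :
    tshW (a :: w₁) (b :: w₂) =
      wd [a] * tshW w₁ (b :: w₂) + wd [b] * tshW (a :: w₁) w₂
        - δw w₁ • (ρt a * wd (b :: w₂)) - δw w₂ • (ρt b * wd (a :: w₁)) := by
  rw [tshW]

def tshuffle : Ht →ₗ[Rt] Ht →ₗ[Rt] Ht :=
  (basis _ _).constr Rt fun w₁ => (basis _ _).constr Rt fun w₂ => tshW w₁.toList w₂.toList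

local infixl:67 " ⧢ " => tshuffle

lemma tshuffle_wd (a b : List (Fin 2)) : wd a ⧢ wd b = tshW a b := by
  have h (l : List (Fin 2)) : wd l = basis _ Rt (FreeMonoid.ofList l) := by
    rw [basis_apply, ← wd_toList, FreeMonoid.toList_ofList]
  rw [h, h, tshuffle, Module.Basis.constr_basis, Module.Basis.constr_basis,
    FreeMonoid.toList_ofList, FreeMonoid.toList_ofList]

lemma tshuffle_apply (u v : Ht) : u ⧢ v = tshH u v := by
  simp only [tshuffle, tshH, Module.Basis.constr_apply, Finsupp.sum, LinearMap.sum_apply,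
    LinearMap.smul_apply, Finset.smul_sum, smul_smul]
  rfl

lemma one_tshuffle (v : Ht) : wd [] ⧢ v = v := by
  suffices tshuffle (wd []) = LinearMap.id from LinearMap.congr_fun this v
  refine (basis _ Rt).ext fun w => ?_
  rw [basis_apply, ← wd_toList, tshuffle_wd, tshW_nil_left, LinearMap.id_apply]

lemma tshuffle_one (u : Ht) : u ⧢ wd [] = u := by
  suffices tshuffle.flip (wd []) = LinearMap.id from LinearMap.congr_fun this u
  refine (basis _ Rt).ext fun w => ?_
  rw [LinearMap.flip_apply, basis_apply, ← wd_toList, tshuffle_wd, tshW_nil_right,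
    LinearMap.id_apply]

def constTerm : Ht →ₗ[Rt] Rt :=
  Finsupp.lapply 1 ∘ₗ (coeffLinearEquiv Rt).toLinearMap

lemma constTerm_apply (u : Ht) : constTerm u = u.coeff 1 := rfl

lemma constTerm_wd (l : List (Fin 2)) : constTerm (wd l) = δw l := by
  cases l <;> simp [constTerm_apply, wd, δw]

lemma constTerm_letter_mul (a : Fin 2) (u : Ht) : constTerm (wd [a] * u) = 0 := by
  rw [constTerm_apply, wd, of_apply]
  refine coeff_single_mul_of_forall_mul_ne _ _ fun d h => ?_
  simpa using congrArg FreeMonoid.length h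

lemma constTerm_ρt_mul (a : Fin 2) (u : Ht) : constTerm (ρt a * u) = 0 := by
  fin_cases a
  · simp [ρt_zero]
  · simp [ρt_one, constTerm_letter_mul]

lemma constTerm_tshW (a b : List (Fin 2)) : constTerm (tshW a b) = δw a * δw b := by
  match a, b with
  | [], b => simp [tshW_nil_left, constTerm_wd, δw]
  | _ :: _, [] => simp [tshW_nil_right, constTerm_wd, δw]
  | _ :: _, _ :: _ =>
    simp only [tshW_cons_cons, map_sub, map_add, map_smul, constTerm_letter_mul, constTerm_ρt_mul,
      smul_zero, sub_zero, add_zero]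
    simp [δw]

lemma induction_smul_wd {P : Ht → Prop} (u : Ht) (zero : P 0)
    (add : ∀ u v, P u → P v → P (u + v)) (smul_wd : ∀ (c : Rt) l, P (c • wd l)) : P u :=
  induction_linear u zero add fun w c => by
    simpa [wd_toList, smul_single] using smul_wd c w.toList

lemma letter_mul_tshuffle_letter_mul (a b : Fin 2) (u v : Ht) :
    wd [a] * u ⧢ wd [b] * v =
      wd [a] * (u ⧢ wd [b] * v) + wd [b] * (wd [a] * u ⧢ v)
        - constTerm u • (ρt a * (wd [b] * v)) - constTerm v • (ρt b * (wd [a] * u)) := by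
  induction u using induction_smul_wd with
  | zero => simp
  | add u₁ u₂ h₁ h₂ =>
    simp only [mul_add, map_add, LinearMap.add_apply, add_smul, smul_add, h₁, h₂]
    module
  | smul_wd c l =>
    induction v using induction_smul_wd with
    | zero => simp
    | add v₁ v₂ h₁ h₂ =>
      simp only [mul_add, map_add, add_smul, smul_add, h₁, h₂]
      module
    | smul_wd c' l' =>
      simp only [mul_smul_comm, map_smul, LinearMap.smul_apply, ← wd_cons, tshuffle_wd,
        tshW_cons_cons, constTerm_wd]
      module

lemma ρt_mul_tshuffle_letter_mul (a b : Fin 2) (u v : Ht) :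
    ρt a * u ⧢ wd [b] * v =
      ρt a * (u ⧢ wd [b] * v) + wd [b] * (ρt a * u ⧢ v) - constTerm v • (ρt b * (ρt a * u)) := by
  match a with
  | 0 => simp [ρt_zero]
  | 1 =>
    simp only [ρt_one, smul_mul_assoc, map_smul, LinearMap.smul_apply,
      letter_mul_tshuffle_letter_mul 0 b, ρt_zero, zero_mul, mul_smul_comm]
    module

lemma letter_mul_tshuffle_ρt_mul (a b : Fin 2) (u v : Ht) :
    wd [a] * u ⧢ ρt b * v =
      wd [a] * (u ⧢ ρt b * v) + ρt b * (wd [a] * u ⧢ v) - constTerm u • (ρt a * (ρt b * v)) := by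
  match b with
  | 0 => simp [ρt_zero]
  | 1 =>
    simp only [ρt_one, smul_mul_assoc, map_smul,
      letter_mul_tshuffle_letter_mul a 0, ρt_zero, zero_mul, mul_smul_comm]
    module

lemma tshW_cons_cons_tshuffle_wd_cons (p q r : Fin 2) (a b c : List (Fin 2)) :
    tshW (p :: a) (q :: b) ⧢ wd (r :: c) =
      wd [p] * (tshW a (q :: b) ⧢ wd (r :: c))
      + wd [q] * (tshW (p :: a) b ⧢ wd (r :: c))
      + wd [r] * (tshW (p :: a) (q :: b) ⧢ wd c)
      - δw a • (ρt p * tshW (q :: b) (r :: c))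
      - δw b • (ρt q * tshW (p :: a) (r :: c))
      - δw c • (ρt r * tshW (p :: a) (q :: b)) := by
  rw [tshW_cons_cons p q a b, wd_cons r c]
  simp only [map_sub, map_add, map_smul, LinearMap.sub_apply, LinearMap.add_apply,
    LinearMap.smul_apply, letter_mul_tshuffle_letter_mul, ρt_mul_tshuffle_letter_mul]
  simp only [← wd_cons, tshuffle_wd, constTerm_wd, constTerm_tshW, δw_cons, mul_zero, zero_mul,
    zero_smul, sub_zero, mul_add, mul_sub, mul_smul_comm]
  module

lemma wd_cons_tshuffle_tshW_cons_cons (p q r : Fin 2) (a b c : List (Fin 2)) :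
    wd (p :: a) ⧢ tshW (q :: b) (r :: c) =
      wd [p] * (wd a ⧢ tshW (q :: b) (r :: c))
      + wd [q] * (wd (p :: a) ⧢ tshW b (r :: c))
      + wd [r] * (wd (p :: a) ⧢ tshW (q :: b) c)
      - δw a • (ρt p * tshW (q :: b) (r :: c))
      - δw b • (ρt q * tshW (p :: a) (r :: c))
      - δw c • (ρt r * tshW (p :: a) (q :: b)) := by
  rw [tshW_cons_cons q r b c, wd_cons p a]
  simp only [map_sub, map_add, map_smul, letter_mul_tshuffle_letter_mul,
    letter_mul_tshuffle_ρt_mul]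
  simp only [← wd_cons, tshuffle_wd, constTerm_wd, constTerm_tshW, δw_cons, mul_zero, zero_mul,
    zero_smul, sub_zero, mul_add, mul_sub, mul_smul_comm]
  module

lemma tshW_tshuffle_wd (a b c : List (Fin 2)) : tshW a b ⧢ wd c = wd a ⧢ tshW b c := by
  match a, b, c with
  | [], b, c => rw [tshW_nil_left, tshuffle_wd, one_tshuffle]
  | _ :: _, [], c => rw [tshW_nil_right, tshW_nil_left, tshuffle_wd]
  | _ :: _, _ :: _, [] => rw [tshuffle_one, tshW_nil_right, tshuffle_wd]
  | p :: a, q :: b, r :: c =>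
    rw [tshW_cons_cons_tshuffle_wd_cons, wd_cons_tshuffle_tshW_cons_cons, tshW_tshuffle_wd a,
      tshW_tshuffle_wd (p :: a) b, tshW_tshuffle_wd (p :: a) (q :: b) c]
termination_by a.length + b.length + c.length

/-- The t-shuffle product is associative (so `(H_t, ⧢_t)` is a commutative Q[t]-algebra). -/
theorem tshuffle_assoc (u v w : Ht) : tshH (tshH u v) w = tshH u (tshH v w) := by
  simp only [← tshuffle_apply]
  suffices h : tshuffle.compr₂ tshuffle =
      (LinearMap.llcomp Rt Ht Ht Ht ∘ₗ tshuffle).compl₂ tshuffle from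
    LinearMap.congr_fun (LinearMap.congr_fun₂ h u v) w
  refine LinearMap.ext_basis (basis _ Rt) (basis _ Rt) fun x y => (basis _ Rt).ext fun z => ?_
  simp only [LinearMap.compr₂_apply, LinearMap.compl₂_apply, LinearMap.comp_apply,
    LinearMap.llcomp_apply, basis_apply, ← wd_toList, tshuffle_wd, tshW_tshuffle_wd]
end
end

section
/- For positive integers m and n, the t-shuffle product of y^m and y^n in H_t = Q[t]⟨x,y⟩ satisfies y^m ⧢_t y^n = C(m+n, n) · y^{m+n} − t · Σ_{i = min{m,n}−1}^{m+n−2} [ C(i, i−m+1) + C(i, i−n+1) ] · y^i x y^{m+n−i−1}, where C(·,·) denotes binomial coefficients. -/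
open scoped BigOperators

noncomputable section

/-- Binomial coefficient `C(n, j)` for an integer `j`, with the convention that it is `0`
when `j < 0` or `j > n`. -/
def ichoose (n : ℕ) (j : ℤ) : ℕ := if 0 ≤ j ∧ j ≤ (n : ℤ) then n.choose j.toNat else 0

/-! Both sides satisfy the same recurrence. Unfolding `y^{a+1} ⧢_t y^{b+1}` gives
`y (y^a ⧢_t y^{b+1}) + y (y^{a+1} ⧢_t y^b)` minus the δ-terms `t x y^{a+b+1}`, which occur only
when `a = 0` or `b = 0`; the closed form obeys the same identity by Pascal's rule, applied to the
leading binomial and to both halves of the coefficient of `y^i x y^{m+n-1-i}`, whose `i = 0` term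
produces exactly the δ-terms. Summing over all `0 ≤ i ≤ m + n - 2` (the terms below `min m n - 1`
vanish) makes the closed form valid for `m = 0` or `n = 0` too, where the induction starts. -/

open Polynomial List

theorem ichoose_of_neg {n : ℕ} {j : ℤ} (h : j < 0) : ichoose n j = 0 :=
  if_neg (by omega)

theorem ichoose_of_lt {n : ℕ} {j : ℤ} (h : (n : ℤ) < j) : ichoose n j = 0 :=
  if_neg (by omega)

theorem ichoose_natCast (n k : ℕ) : ichoose n k = n.choose k := by
  unfold ichoose
  split_ifs with h
  · simp
  · rw [Nat.choose_eq_zero_of_lt (by omega)]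

theorem ichoose_zero_left (j : ℤ) : ichoose 0 j = if j = 0 then 1 else 0 := by
  unfold ichoose
  split_ifs <;> first | omega | simp_all

theorem ichoose_succ (n : ℕ) (j : ℤ) : ichoose (n + 1) j = ichoose n (j - 1) + ichoose n j := by
  rcases lt_or_ge j 0 with hj | hj
  · rw [ichoose_of_neg hj, ichoose_of_neg hj, ichoose_of_neg (by omega)]
  lift j to ℕ using hj
  cases j with
  | zero => rw [ichoose_natCast, ichoose_natCast, ichoose_of_neg (by omega)]; simp
  | succ k =>
    rw [show ((k + 1 : ℕ) : ℤ) - 1 = k by omega, ichoose_natCast, ichoose_natCast, ichoose_natCast,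
      Nat.choose_succ_succ']

theorem wd_append (l₁ l₂ : List (Fin 2)) : wd (l₁ ++ l₂) = wd l₁ * wd l₂ := by
  simp [wd]

theorem wy_pow (m : ℕ) : wy ^ m = wd (replicate m 1) := by
  induction m with
  | zero => rfl
  | succ k ih => rw [pow_succ, ih, wy, ← wd_append, replicate_succ']

theorem tshH_wd (w₁ w₂ : List (Fin 2)) : tshH (wd w₁) (wd w₂) = tshW w₁ w₂ := by
  simp [tshH, wd, MonoidAlgebra.of_apply]

def tshCoeff (m n i : ℕ) : ℕ := ichoose i ((i : ℤ) - m + 1) + ichoose i ((i : ℤ) - n + 1)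

theorem tshCoeff_eq_zero {m n i : ℕ} (hm : m = 0 ∨ i + 1 < m) (hn : n = 0 ∨ i + 1 < n) :
    tshCoeff m n i = 0 := by
  have vanish : ∀ k : ℕ, k = 0 ∨ i + 1 < k → ichoose i ((i : ℤ) - k + 1) = 0 := by
    rintro k (rfl | hk)
    · exact ichoose_of_lt (by omega)
    · exact ichoose_of_neg (by omega)
  rw [tshCoeff, vanish m hm, vanish n hn]

theorem tshCoeff_succ_succ_zero (a b : ℕ) :
    tshCoeff (a + 1) (b + 1) 0 = (if a = 0 then 1 else 0) + (if b = 0 then 1 else 0) := by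
  simp only [tshCoeff, ichoose_zero_left]
  congr 1 <;> congr 1 <;> simp

theorem tshCoeff_succ_succ_succ (a b i : ℕ) :
    tshCoeff (a + 1) (b + 1) (i + 1) = tshCoeff a (b + 1) i + tshCoeff (a + 1) b i := by
  simp only [tshCoeff, ichoose_succ]
  push_cast
  ring_nf

def tshCorrection (m n : ℕ) : Ht :=
  ∑ i ∈ Finset.range (m + n - 1), (tshCoeff m n i : Rt) • (wy ^ i * wx * wy ^ (m + n - 1 - i))

theorem tshCorrection_zero_left (n : ℕ) : tshCorrection 0 n = 0 :=
  Finset.sum_eq_zero fun i hi => by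
    rw [tshCoeff_eq_zero (.inl rfl) (.inr (by have := Finset.mem_range.1 hi; omega)),
      Nat.cast_zero, zero_smul]

theorem tshCorrection_zero_right (m : ℕ) : tshCorrection m 0 = 0 :=
  Finset.sum_eq_zero fun i hi => by
    rw [tshCoeff_eq_zero (.inr (by have := Finset.mem_range.1 hi; omega)) (.inl rfl),
      Nat.cast_zero, zero_smul]

theorem tshCorrection_succ_succ (a b : ℕ) :
    tshCorrection (a + 1) (b + 1) =
      wy * tshCorrection a (b + 1) + wy * tshCorrection (a + 1) b +
        ((if a = 0 then 1 else 0) + (if b = 0 then 1 else 0) : Rt) • (wx * wy ^ (a + b + 1)) := by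
  have hlen : ∀ m n, m + n = a + b + 1 → tshCorrection m n =
      ∑ i ∈ Finset.range (a + b),
        (tshCoeff m n i : Rt) • (wy ^ i * wx * wy ^ (a + b - i)) := by
    rintro m n h
    simp only [tshCorrection, h, Nat.add_sub_cancel]
  rw [tshCorrection, show a + 1 + (b + 1) - 1 = a + b + 1 by omega, Finset.sum_range_succ',
    hlen a (b + 1) (by omega), hlen (a + 1) b (by omega), Finset.mul_sum, Finset.mul_sum,
    ← Finset.sum_add_distrib, tshCoeff_succ_succ_zero]
  congr 1
  · refine Finset.sum_congr rfl fun i hi => ?_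
    rw [tshCoeff_succ_succ_succ, Nat.cast_add, add_smul, mul_smul_comm, mul_smul_comm,
      show a + b + 1 - (i + 1) = a + b - i by omega, pow_succ', mul_assoc, mul_assoc, mul_assoc]
  · push_cast
    rw [pow_zero, one_mul]

def tshClosed (m n : ℕ) : Ht :=
  ((m + n).choose n : Rt) • wy ^ (m + n) - (X : Rt) • tshCorrection m n

theorem tshClosed_succ_succ (a b : ℕ) :
    tshClosed (a + 1) (b + 1) =
      wy * tshClosed a (b + 1) + wy * tshClosed (a + 1) b -
        (X : Rt) • ((if a = 0 then 1 else 0) + (if b = 0 then 1 else 0) : Rt) •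
          (wx * wy ^ (a + b + 1)) := by
  have hpow : ∀ m n, m + n = a + b + 1 → wy * wy ^ (m + n) = wy ^ (a + 1 + (b + 1)) := by
    rintro m n h
    rw [h, ← pow_succ']
    ring_nf
  have hchoose : (a + 1 + (b + 1)).choose (b + 1) =
      (a + (b + 1)).choose (b + 1) + (a + 1 + b).choose b := by
    rw [show a + 1 + (b + 1) = (a + b + 1) + 1 by omega, Nat.choose_succ_succ', add_comm,
      show a + (b + 1) = a + b + 1 by omega, show a + 1 + b = a + b + 1 by omega]
  simp only [tshClosed, tshCorrection_succ_succ, hchoose, mul_sub, mul_smul_comm,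
    hpow a (b + 1) (by omega), hpow (a + 1) b (by omega), Nat.cast_add]
  module

theorem tshW_replicate_succ_succ (a b : ℕ) :
    tshW (replicate (a + 1) 1) (replicate (b + 1) 1) =
      wy * tshW (replicate a 1) (replicate (b + 1) 1) +
        wy * tshW (replicate (a + 1) 1) (replicate b 1) -
        (X : Rt) • ((if a = 0 then 1 else 0) + (if b = 0 then 1 else 0) : Rt) •
          (wx * wy ^ (a + b + 1)) := by
  have hδ : ∀ k l, δw (replicate k 1) • (ρt 1 * wd (1 :: replicate l 1)) =
      (X : Rt) • (if k = 0 then 1 else 0 : Rt) • (wx * wy ^ (k + l + 1)) := by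
    rintro (_ | k) l
    · simp [δw, ρt, wy_pow, replicate_succ]
    · simp [δw]
  rw [replicate_succ, replicate_succ, tshW, hδ, hδ, ← replicate_succ, ← replicate_succ]
  simp only [add_comm b a, smul_add, add_smul, sub_sub, wy]

theorem tshW_replicate (m n : ℕ) : tshW (replicate m 1) (replicate n 1) = tshClosed m n := by
  induction m generalizing n with
  | zero =>
    rw [tshClosed, tshCorrection_zero_left, zero_add, Nat.choose_self, wy_pow, replicate_zero,
      tshW.eq_1]
    simp
  | succ a iha =>
    induction n with
    | zero =>
      rw [tshClosed, tshCorrection_zero_right, add_zero, Nat.choose_zero_right, wy_pow,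
        replicate_zero, replicate_succ, tshW.eq_2]
      simp
    | succ b ihb => rw [tshW_replicate_succ_succ, iha, ihb, tshClosed_succ_succ]

theorem tshCorrection_eq_sum_Icc {m n : ℕ} (hm : 1 ≤ m) (hn : 1 ≤ n) :
    tshCorrection m n = ∑ i ∈ Finset.Icc (min m n - 1) (m + n - 2),
      (tshCoeff m n i : Rt) • (wy ^ i * wx * wy ^ (m + n - i - 1)) := by
  have hrange : Finset.range (m + n - 1) = Finset.Icc 0 (m + n - 2) := by
    ext i
    simp only [Finset.mem_range, Finset.mem_Icc]
    omega
  rw [tshCorrection, hrange]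
  symm
  refine Finset.sum_subset_zero_on_sdiff (Finset.Icc_subset_Icc (Nat.zero_le _) le_rfl)
    (fun i hi => ?_) (fun i _ => by rw [Nat.sub_right_comm])
  simp only [Finset.mem_sdiff, Finset.mem_Icc] at hi
  rw [tshCoeff_eq_zero (.inr (by omega)) (.inr (by omega)), Nat.cast_zero, zero_smul]

/-- Lemma: for positive integers m, n,
`y^m ⧢_t y^n = C(m+n,n)·y^{m+n} − t·Σ_{i=min{m,n}−1}^{m+n−2} (C(i,i−m+1)+C(i,i−n+1)) y^i x y^{m+n−i−1}`. -/
theorem tshuffle_ym_yn (m n : ℕ) (hm : 1 ≤ m) (hn : 1 ≤ n) :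
    tshH (wy ^ m) (wy ^ n) =
      (((m + n).choose n : Rt)) • wy ^ (m + n) -
        (Polynomial.X : Rt) •
          ∑ i ∈ Finset.Icc (min m n - 1) (m + n - 2),
            ((ichoose i ((i : ℤ) - m + 1) + ichoose i ((i : ℤ) - n + 1) : ℕ) : Rt) •
              (wy ^ i * wx * wy ^ (m + n - i - 1)) := by
  rw [wy_pow m, wy_pow n, tshH_wd, tshW_replicate, tshClosed, tshCorrection_eq_sum_Icc hm hn]
  rfl
end
end

section
/- For any even positive integer k, Σ_{j=0}^{k} (−1)^j ζ(j+2) ζ(k−j+2) = 2 ζ*(k+3, 1), where ζ*(a, b) = Σ_{m ≥ n ≥ 1} 1/(m^a n^b) is the double zeta-star value. -/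
/-!
For even `k` and `x, y > 0`, summing the geometric progression gives
`Σ_j (-1)^j x^(-j-2) y^(j-k-2) = 1/(x y^(k+2) (x+y)) + 1/(x^(k+2) y (x+y))`.
Summed over `x, y ≥ 1`, the left side becomes the alternating sum of products of zeta values and
the right side twice the Tornheim sum `T(k+2, 1, 1) = Σ_{m,n} 1/(m^(k+2) n (m+n))`.
Partial fractions `1/(n(m+n)) = (1/n - 1/(m+n))/m` collapse its inner sum to `H_m/m^(k+3)`, and
`Σ_m H_m/m^(k+3) = ζ*(k+3, 1)`.
-/

open scoped BigOperators

noncomputable section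

/-- The Riemann zeta value `ζ(s) = Σ_{n ≥ 1} 1/n^s`. -/
def zeta (s : ℕ) : ℝ := ∑' n : ℕ, 1 / ((n : ℝ) + 1) ^ s

/-- The double zeta-star value `ζ*(a,b) = Σ_{m ≥ n ≥ 1} 1/(m^a n^b)`. -/
def zetaStar (a b : ℕ) : ℝ :=
  ∑' p : {q : ℕ × ℕ // q.2 ≤ q.1}, 1 / (((p.1.1 : ℝ) + 1) ^ a * ((p.1.2 : ℝ) + 1) ^ b)

/-- The double zeta value `ζ(a,b) = Σ_{m > n ≥ 1} 1/(m^a n^b)`. -/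
def dzeta (a b : ℕ) : ℝ :=
  ∑' p : {q : ℕ × ℕ // q.2 < q.1}, 1 / (((p.1.1 : ℝ) + 1) ^ a * ((p.1.2 : ℝ) + 1) ^ b)

open Finset Filter Topology

lemma Even.add_mul_sum_neg_one_pow_mul_pow {R : Type*} [CommRing R] {k : ℕ} (hk : Even k)
    (x y : R) :
    (x + y) * ∑ j ∈ range (k + 1), (-1) ^ j * x ^ j * y ^ (k - j) =
      x ^ (k + 1) + y ^ (k + 1) := by
  have h := geom_sum₂_mul (-x) y (k + 1)
  simp only [Nat.add_sub_cancel, _root_.neg_pow x, hk.add_one.neg_one_pow] at h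
  linear_combination -h

lemma Even.sum_neg_one_pow_mul_one_div_pow {K : Type*} [Field K] {k : ℕ} (hk : Even k)
    {x y : K} (hx : x ≠ 0) (hy : y ≠ 0) (hxy : x + y ≠ 0) :
    ∑ j ∈ range (k + 1), (-1) ^ j * (1 / x ^ (j + 2) * (1 / y ^ (k - j + 2))) =
      1 / (x * y ^ (k + 2) * (x + y)) + 1 / (x ^ (k + 2) * y * (x + y)) := by
  have hterm : ∀ j ∈ range (k + 1), (-1) ^ j * (1 / x ^ (j + 2) * (1 / y ^ (k - j + 2))) =
      (-1) ^ j * y ^ j * x ^ (k - j) / (x ^ (k + 2) * y ^ (k + 2)) := by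
    intro j hj
    obtain ⟨i, rfl⟩ := Nat.exists_eq_add_of_le (Nat.lt_succ_iff.mp (mem_range.mp hj))
    rw [Nat.add_sub_cancel_left]
    field_simp
    ring
  have hgeom : ∑ j ∈ range (k + 1), (-1) ^ j * y ^ j * x ^ (k - j) =
      (y ^ (k + 1) + x ^ (k + 1)) / (x + y) :=
    eq_div_of_mul_eq hxy (by rw [mul_comm, add_comm x, hk.add_mul_sum_neg_one_pow_mul_pow])
  rw [sum_congr rfl hterm, ← sum_div, hgeom]
  field_simp
  ring

lemma summable_one_div_succ_pow {s : ℕ} (hs : 2 ≤ s) :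
    Summable fun n : ℕ => 1 / ((n : ℝ) + 1) ^ s := by
  simpa using (summable_nat_add_iff 1).mpr (Real.summable_one_div_nat_pow.mpr hs)

lemma hasSum_sub_add_of_antitone {f : ℕ → ℝ} (hmono : Antitone f)
    (hf : Tendsto f atTop (𝓝 0)) (m : ℕ) :
    HasSum (fun n => f n - f (n + m)) (∑ i ∈ range m, f i) := by
  have hpartial (N : ℕ) : ∑ n ∈ range N, (f n - f (n + m)) =
      ∑ i ∈ range m, f i - ∑ i ∈ range m, f (N + i) := by
    have h₁ := sum_range_add f N m
    have h₂ := sum_range_add f m N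
    rw [add_comm m N] at h₂
    simp only [sum_sub_distrib, add_comm _ m]
    linarith
  rw [hasSum_iff_tendsto_nat_of_nonneg fun n => sub_nonneg.mpr (hmono (Nat.le_add_right n m))]
  have htail : Tendsto (fun N => ∑ i ∈ range m, f (N + i)) atTop (𝓝 0) := by
    simpa using tendsto_finsetSum (range m) fun i _ => hf.comp (tendsto_add_atTop_nat i)
  simpa [hpartial] using (tendsto_const_nhds (x := ∑ i ∈ range m, f i)).sub htail

lemma harmonic_le_self (n : ℕ) : harmonic n ≤ n := by
  induction n with
  | zero => simp
  | succ n ih =>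
    rw [harmonic_succ]
    push_cast
    have hinv : ((n : ℚ) + 1)⁻¹ ≤ 1 := inv_le_one_of_one_le₀ (by simp)
    linarith

lemma hasSum_one_div_succ_sub (m : ℕ) :
    HasSum (fun n : ℕ => 1 / ((n : ℝ) + 1) - 1 / ((n : ℝ) + m + 1)) (harmonic m) := by
  have hmono : Antitone fun n : ℕ => 1 / ((n : ℝ) + 1) := fun a b hab => by
    dsimp only
    gcongr
  convert hasSum_sub_add_of_antitone hmono (tendsto_one_div_add_atTop_nhds_zero_nat) m using 1
  · ext n; push_cast; ring_nf
  · simp [harmonic, one_div]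

/-- Summand `m⁻ᵃ n⁻ᵇ (m + n)⁻¹` of the Tornheim double series, indices shifted by one. -/
def tornheimTerm (a b m n : ℕ) : ℝ :=
  1 / (((m : ℝ) + 1) ^ a * ((n : ℝ) + 1) ^ b * (((m : ℝ) + 1) + ((n : ℝ) + 1)))

lemma tornheimTerm_comm (a b m n : ℕ) : tornheimTerm a b m n = tornheimTerm b a n m := by
  unfold tornheimTerm
  ring

lemma tornheimTerm_nonneg (a b m n : ℕ) : 0 ≤ tornheimTerm a b m n := by
  unfold tornheimTerm
  positivity

lemma hasSum_tornheimTerm_one (a m : ℕ) :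
    HasSum (fun n => tornheimTerm a 1 m n) (harmonic (m + 1) / ((m : ℝ) + 1) ^ (a + 1)) := by
  refine ((hasSum_one_div_succ_sub (m + 1)).div_const (((m : ℝ) + 1) ^ (a + 1))).congr_fun
    fun n => ?_
  unfold tornheimTerm
  push_cast
  field_simp
  ring

lemma summable_harmonic_succ_div_pow {s : ℕ} (hs : 3 ≤ s) :
    Summable fun m : ℕ => (harmonic (m + 1) : ℝ) / ((m : ℝ) + 1) ^ s := by
  refine (summable_one_div_succ_pow (s := s - 1) (by omega)).of_nonneg_of_le
    (fun m => div_nonneg (by exact_mod_cast (harmonic_pos m.succ_ne_zero).le) (by positivity))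
    fun m => ?_
  have hH : (harmonic (m + 1) : ℝ) ≤ (m : ℝ) + 1 := by exact_mod_cast harmonic_le_self (m + 1)
  calc (harmonic (m + 1) : ℝ) / ((m : ℝ) + 1) ^ s
      ≤ ((m : ℝ) + 1) / ((m : ℝ) + 1) ^ s := by gcongr
    _ = 1 / ((m : ℝ) + 1) ^ (s - 1) := by
        rw [show s = s - 1 + 1 by omega, pow_succ]
        field_simp
        simp

def sigmaFinSuccEquivLe : (Σ m : ℕ, Fin (m + 1)) ≃ {q : ℕ × ℕ // q.2 ≤ q.1} where
  toFun x := ⟨(x.1, x.2), Nat.le_of_lt_succ x.2.isLt⟩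
  invFun q := ⟨q.1.1, ⟨q.1.2, Nat.lt_succ_of_le q.2⟩⟩
  left_inv _ := rfl
  right_inv _ := rfl

lemma zetaStar_one_eq_tsum_harmonic {s : ℕ} (hs : 3 ≤ s) :
    zetaStar s 1 = ∑' m : ℕ, (harmonic (m + 1) : ℝ) / ((m : ℝ) + 1) ^ s := by
  set F : (Σ m : ℕ, Fin (m + 1)) → ℝ :=
    fun x => 1 / (((x.1 : ℝ) + 1) ^ s * (((x.2 : ℕ) : ℝ) + 1) ^ 1)
  have hfiber (m : ℕ) : ∑' i, F ⟨m, i⟩ = harmonic (m + 1) / ((m : ℝ) + 1) ^ s := by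
    rw [tsum_fintype,
      Fin.sum_univ_eq_sum_range (fun i => 1 / (((m : ℝ) + 1) ^ s * ((i : ℝ) + 1) ^ 1)),
      harmonic, Rat.cast_sum, sum_div]
    refine sum_congr rfl fun i _ => ?_
    push_cast
    field_simp
  have hF : Summable F := by
    refine (summable_sigma_of_nonneg fun x => by positivity).mpr
      ⟨fun m => (hasSum_fintype _).summable, ?_⟩
    simpa only [hfiber] using summable_harmonic_succ_div_pow hs
  calc zetaStar s 1 = ∑' x, F x := by rw [zetaStar, ← sigmaFinSuccEquivLe.tsum_eq]; rfl
    _ = ∑' m, ∑' i, F ⟨m, i⟩ := hF.tsum_sigma' fun m => (hasSum_fintype _).summable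
    _ = _ := tsum_congr hfiber

lemma hasSum_prod_tornheimTerm_one {a : ℕ} (ha : 2 ≤ a) :
    HasSum (fun p : ℕ × ℕ => tornheimTerm a 1 p.1 p.2) (zetaStar (a + 1) 1) := by
  have hfiber := hasSum_tornheimTerm_one a
  have hsum : Summable fun p : ℕ × ℕ => tornheimTerm a 1 p.1 p.2 :=
    (summable_prod_of_nonneg fun p => tornheimTerm_nonneg a 1 p.1 p.2).mpr
      ⟨fun m => (hfiber m).summable, by
        simpa only [(hfiber _).tsum_eq] using summable_harmonic_succ_div_pow (by omega)⟩
  rw [zetaStar_one_eq_tsum_harmonic (by omega), ← tsum_congr fun m => (hfiber m).tsum_eq,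
    ← hsum.tsum_prod' fun m => (hfiber m).summable]
  exact hsum.hasSum

lemma hasSum_zeta_mul_zeta {s t : ℕ} (hs : 2 ≤ s) (ht : 2 ≤ t) :
    HasSum (fun p : ℕ × ℕ => 1 / ((p.1 : ℝ) + 1) ^ s * (1 / ((p.2 : ℝ) + 1) ^ t))
      (zeta s * zeta t) :=
  (summable_one_div_succ_pow hs).hasSum.mul (summable_one_div_succ_pow ht).hasSum
    ((summable_one_div_succ_pow hs).mul_of_nonneg (summable_one_div_succ_pow ht)
      (fun _ => by positivity) fun _ => by positivity)

theorem alt_zeta_sum_even_general (k : ℕ) (hk : Even k) :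
    ∑ j ∈ Finset.range (k + 1), (-1 : ℝ) ^ j * zeta (j + 2) * zeta (k - j + 2) =
      2 * zetaStar (k + 3) 1 := by
  have hterms := hasSum_sum fun j (_ : j ∈ range (k + 1)) =>
    (hasSum_zeta_mul_zeta (s := j + 2) (t := k - j + 2) (by omega) (by omega)).mul_left ((-1) ^ j)
  have hT := hasSum_prod_tornheimTerm_one (a := k + 2) (by omega)
  have hT' : HasSum (fun p : ℕ × ℕ => tornheimTerm 1 (k + 2) p.1 p.2) (zetaStar (k + 3) 1) :=
    ((Equiv.prodComm ℕ ℕ).hasSum_iff.mpr hT).congr_fun fun p => tornheimTerm_comm _ _ _ _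
  have hsplit : HasSum
      (fun p : ℕ × ℕ => tornheimTerm 1 (k + 2) p.1 p.2 + tornheimTerm (k + 2) 1 p.1 p.2)
      (2 * zetaStar (k + 3) 1) := by
    rw [two_mul]
    exact hT'.add hT
  simp only [mul_assoc]
  refine hterms.unique (hsplit.congr_fun fun p => ?_)
  rw [tornheimTerm, tornheimTerm, pow_one, pow_one]
  exact hk.sum_neg_one_pow_mul_one_div_pow (by positivity) (by positivity) (by positivity)

/-- For even positive `k`, `Σ_{j=0}^{k} (−1)^j ζ(j+2) ζ(k−j+2) = 2 ζ*(k+3, 1)`. -/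
theorem alt_zeta_sum_even (k : ℕ) (hk : Even k) (hk0 : 0 < k) :
    ∑ j ∈ Finset.range (k + 1), (-1 : ℝ) ^ j * zeta (j + 2) * zeta (k - j + 2) =
      2 * zetaStar (k + 3) 1 :=
  alt_zeta_sum_even_general k hk
end
end

section
/- For any odd integer k ≥ 3, ζ*(k−1, 1) = ((k+1)/2) ζ(k) − Σ_{2 ≤ j ≤ k−2, j odd} ζ(j) ζ(k−j), where ζ*(a,b) = Σ_{m≥n≥1} m^{−a} n^{−b}. -/
open scoped BigOperators

noncomputable section

/-!
Summing the stuffle relations `ζ(j) ζ(k-j) = ζ(j,k-j) + ζ(k-j,j) + ζ(k)` over `2 ≤ j ≤ k-2` and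
using Euler's sum theorem `∑_{a=2}^{k-1} ζ(a,k-a) = ζ(k)` together with
`ζ*(k-1,1) = ζ(k-1,1) + ζ(k)` gives `∑_{j=2}^{k-2} ζ(j) ζ(k-j) = (k+1) ζ(k) - 2 ζ*(k-1,1)`
for every `k ≥ 3`. For odd `k` the reflection `j ↦ k-j` swaps parities, so this sum is twice
its odd part.

For the sum theorem write `m = n + d` and expand in partial fractions:
`∑_{a=2}^{k-1} 1/(m^a n^(k-a)) = (1/d - 1/m)/n^(k-1) - 1/(d m^(k-1))`.
Over `d ≥ 1` the first part telescopes to `H_n / n^(k-1)`, whose sum over `n` is `ζ*(k-1,1)`;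
the second part, summed over `m > d ≥ 1`, is `ζ(k-1,1)`.
-/

namespace MZV

open Filter Topology Finset

theorem hasSum_sub_succ_of_antitone {f : ℕ → ℝ} (hf : Antitone f)
    (h0 : Tendsto f atTop (𝓝 0)) : HasSum (fun n => f n - f (n + 1)) (f 0) := by
  rw [hasSum_iff_tendsto_nat_of_nonneg fun n => sub_nonneg.2 (hf n.le_succ)]
  simp only [sum_range_sub']
  simpa using tendsto_const_nhds.sub h0

theorem hasSum_one_div_add_sub (c : ℝ) (hc : 0 < c) :
    HasSum (fun d : ℕ => 1 / ((d : ℝ) + c) - 1 / ((d : ℝ) + c + 1)) (1 / c) := by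
  have hanti : Antitone fun d : ℕ => 1 / ((d : ℝ) + c) := fun d e hde => by
    simp only
    gcongr
  have hlim : Tendsto (fun d : ℕ => 1 / ((d : ℝ) + c)) atTop (𝓝 0) :=
    tendsto_const_nhds.div_atTop (tendsto_atTop_add_const_right _ _ tendsto_natCast_atTop_atTop)
  simpa [add_right_comm] using hasSum_sub_succ_of_antitone hanti hlim

theorem hasSum_prod_of_nonneg {α β : Type*} {f : α × β → ℝ} (hf : 0 ≤ f) {g : α → ℝ} {s : ℝ}
    (hfib : ∀ x, HasSum (fun y => f (x, y)) (g x)) (hg : HasSum g s) : HasSum f s := by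
  have hsum : Summable f := (summable_prod_of_nonneg hf).2
    ⟨fun x => (hfib x).summable, hg.summable.congr fun x => ((hfib x).tsum_eq).symm⟩
  have hf := hsum.hasSum
  rwa [(hf.prod_fiberwise hfib).unique hg] at hf

theorem sub_mul_sum_pow_mul_pow {R : Type*} [CommRing R] (x y : R) {k : ℕ} (hk : 2 ≤ k) :
    (y - x) * ∑ a ∈ Icc 2 (k - 1), x ^ a * y ^ (k - a) = x ^ 2 * y ^ (k - 1) - x ^ k * y := by
  set u : ℕ → R := fun a => -(x ^ a * y ^ (k + 1 - a))
  have hu : ∀ a ∈ Ico 2 k, (y - x) * (x ^ a * y ^ (k - a)) = u (a + 1) - u a := fun a ha => by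
    rw [mem_Ico] at ha
    simp only [u, show k + 1 - a = k - a + 1 by omega, show k + 1 - (a + 1) = k - a by omega]
    ring
  rw [show Icc 2 (k - 1) = Ico 2 k by ext; simp; omega, mul_sum, sum_congr rfl hu,
    sum_Ico_sub u hk]
  simp only [u, show k + 1 - k = 1 by omega, show k + 1 - 2 = k - 1 by omega]
  ring

theorem sum_one_div_pow_mul_pow {K : Type*} [Field K] {M N : K} (hM : M ≠ 0) (hN : N ≠ 0)
    (hMN : M - N ≠ 0) {k : ℕ} (hk : 2 ≤ k) :
    ∑ a ∈ Icc 2 (k - 1), 1 / (M ^ a * N ^ (k - a)) =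
      (1 / (M - N) - 1 / M) / N ^ (k - 1) - 1 / ((M - N) * M ^ (k - 1)) := by
  have h := sub_mul_sum_pow_mul_pow (1 / M) (1 / N) hk
  have hyx : 1 / N - 1 / M ≠ 0 := by
    rw [div_sub_div _ _ hN hM]
    exact div_ne_zero (by simpa using hMN) (mul_ne_zero hN hM)
  simp only [div_pow, one_pow, div_mul_div_comm, one_mul] at h
  rw [← mul_right_inj' hyx, h]
  obtain ⟨j, rfl⟩ : ∃ j, k = j + 2 := ⟨k - 2, by omega⟩
  simp only [show j + 2 - 1 = j + 1 by omega]
  field_simp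
  ring

theorem sum_Icc_sub_reflect {M : Type*} [AddCommMonoid M] (f : ℕ → M) (a k : ℕ) :
    ∑ j ∈ Icc a (k - a), f (k - j) = ∑ j ∈ Icc a (k - a), f j :=
  sum_nbij' (k - ·) (k - ·) (fun j hj => by simp only [mem_Icc] at hj ⊢; omega)
    (fun j hj => by simp only [mem_Icc] at hj ⊢; omega)
    (fun j hj => by simp only [mem_Icc] at hj; omega)
    (fun j hj => by simp only [mem_Icc] at hj; omega) fun _ _ => rfl

theorem sum_Icc_eq_two_nsmul_sum_filter_odd {M : Type*} [AddCommMonoid M] {k : ℕ} (hk : Odd k)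
    (f : ℕ → M) (hf : ∀ j ≤ k, f (k - j) = f j) (a : ℕ) :
    ∑ j ∈ Icc a (k - a), f j = 2 • ∑ j ∈ (Icc a (k - a)).filter (fun j => Odd j), f j := by
  rw [← sum_filter_add_sum_filter_not _ (fun j => Odd j), two_nsmul]
  congr 1
  rw [sum_filter, sum_filter, ← sum_Icc_sub_reflect _ a k]
  refine sum_congr rfl fun j hj => ?_
  rw [mem_Icc] at hj
  have hjk : j ≤ k := by omega
  simp [hf j hjk, Nat.odd_sub hjk, hk]

theorem summable_one_div_succ_pow {s : ℕ} (hs : 2 ≤ s) :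
    Summable fun n : ℕ => 1 / ((n : ℝ) + 1) ^ s := by
  simpa using (summable_nat_add_iff 1).2 (Real.summable_one_div_nat_pow.2 hs)

theorem hasSum_zeta {s : ℕ} (hs : 2 ≤ s) :
    HasSum (fun n : ℕ => 1 / ((n : ℝ) + 1) ^ s) (zeta s) :=
  (summable_one_div_succ_pow hs).hasSum

theorem hasSum_one_div_succ_mul_sub : HasSum (fun p : ℕ × ℕ => 1 / ((p.1 : ℝ) + 1) *
    (1 / ((p.2 : ℝ) + ((p.1 : ℝ) + 1)) - 1 / ((p.2 : ℝ) + ((p.1 : ℝ) + 1) + 1))) (zeta 2) := by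
  refine hasSum_prod_of_nonneg (g := fun n : ℕ => 1 / ((n : ℝ) + 1) * (1 / ((n : ℝ) + 1)))
    (fun p => ?_) (fun n => (hasSum_one_div_add_sub ((n : ℝ) + 1) (by positivity)).mul_left _) ?_
  · have : 1 / ((p.2 : ℝ) + ((p.1 : ℝ) + 1) + 1) ≤ 1 / ((p.2 : ℝ) + ((p.1 : ℝ) + 1)) :=
      one_div_le_one_div_of_le (by positivity) (by linarith)
    exact mul_nonneg (by positivity) (sub_nonneg.2 this)
  · simpa [← one_div_mul_one_div, sq] using hasSum_zeta (s := 2) le_rfl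

def doubleTerm (a b : ℕ) (q : ℕ × ℕ) : ℝ := 1 / (((q.1 : ℝ) + 1) ^ a * ((q.2 : ℝ) + 1) ^ b)

/-- The summand of `ζ(a,b)` at `m = n + d + 2 > n + 1`, for `p = (n, d)`: it turns `dzeta` into a
sum over `ℕ × ℕ`. -/
def shiftedTerm (a b : ℕ) (p : ℕ × ℕ) : ℝ :=
  1 / (((p.1 : ℝ) + p.2 + 2) ^ a * ((p.1 : ℝ) + 1) ^ b)

def ltEquiv : ℕ × ℕ ≃ {q : ℕ × ℕ // q.2 < q.1} where
  toFun p := ⟨(p.1 + p.2 + 1, p.1), by simp only; omega⟩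
  invFun q := (q.1.2, q.1.1 - q.1.2 - 1)
  left_inv p := Prod.ext rfl (by simp only; omega)
  right_inv := fun ⟨⟨m, n⟩, h⟩ => Subtype.ext (Prod.ext (by simp only at h ⊢; omega) rfl)

def diagEquiv : ℕ ≃ {q : ℕ × ℕ // q.2 = q.1} where
  toFun n := ⟨(n, n), rfl⟩
  invFun q := q.1.1
  left_inv _ := rfl
  right_inv q := Subtype.ext (Prod.ext rfl q.2.symm)

def leEquiv : (Σ m : ℕ, Fin (m + 1)) ≃ {q : ℕ × ℕ // q.2 ≤ q.1} where
  toFun x := ⟨(x.1, x.2), Nat.lt_succ_iff.mp x.2.2⟩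
  invFun q := ⟨q.1.1, q.1.2, Nat.lt_succ_of_le q.2⟩
  left_inv _ := rfl
  right_inv _ := rfl

variable {a b k : ℕ}

theorem doubleTerm_ltEquiv (p : ℕ × ℕ) : doubleTerm a b (ltEquiv p) = shiftedTerm a b p := by
  simp only [doubleTerm, shiftedTerm, ltEquiv, Equiv.coe_fn_mk]
  push_cast
  ring_nf

theorem summable_shiftedTerm (ha : 2 ≤ a) (hb : 1 ≤ b) : Summable (shiftedTerm a b) := by
  refine hasSum_one_div_succ_mul_sub.summable.of_nonneg_of_le
    (fun p => by unfold shiftedTerm; positivity) fun ⟨n, d⟩ => ?_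
  have hN : (1 : ℝ) ≤ n + 1 := by simp
  have hM : (1 : ℝ) ≤ n + d + 2 := by linarith [(d.cast_nonneg : (0 : ℝ) ≤ d)]
  have key : ((n : ℝ) + 1) * (((d : ℝ) + ((n : ℝ) + 1)) * ((d : ℝ) + ((n : ℝ) + 1) + 1)) ≤
      ((n : ℝ) + d + 2) ^ a * ((n : ℝ) + 1) ^ b :=
    calc _ ≤ ((n : ℝ) + d + 2) ^ 2 * ((n : ℝ) + 1) ^ 1 := by nlinarith
      _ ≤ _ := by gcongr
  calc shiftedTerm a b (n, d) ≤ 1 / (((n : ℝ) + 1) *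
        (((d : ℝ) + ((n : ℝ) + 1)) * ((d : ℝ) + ((n : ℝ) + 1) + 1))) :=
        one_div_le_one_div_of_le (by positivity) key
    _ = _ := by field_simp; ring

theorem hasSum_shiftedTerm (ha : 2 ≤ a) (hb : 1 ≤ b) : HasSum (shiftedTerm a b) (dzeta a b) := by
  convert (summable_shiftedTerm ha hb).hasSum
  simp only [dzeta, ← doubleTerm_ltEquiv]
  exact (ltEquiv.tsum_eq (fun q => doubleTerm a b q)).symm

theorem hasSum_dzeta (ha : 2 ≤ a) (hb : 1 ≤ b) :
    HasSum (fun q : {q : ℕ × ℕ // q.2 < q.1} => doubleTerm a b q) (dzeta a b) :=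
  ltEquiv.hasSum_iff.mp <| by
    simpa only [Function.comp_def, doubleTerm_ltEquiv] using hasSum_shiftedTerm ha hb

theorem hasSum_dzeta_add_zeta (ha : 2 ≤ a) (hb : 1 ≤ b) :
    HasSum (fun q : {q : ℕ × ℕ // q.2 ≤ q.1} => doubleTerm a b q) (dzeta a b + zeta (a + b)) := by
  have hlt : HasSum (doubleTerm a b ∘ (↑) : {q : ℕ × ℕ | q.2 < q.1} → ℝ) (dzeta a b) :=
    hasSum_dzeta ha hb
  have hdiag : HasSum (doubleTerm a b ∘ (↑) : {q : ℕ × ℕ | q.2 = q.1} → ℝ) (zeta (a + b)) :=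
    diagEquiv.hasSum_iff.mp <| (hasSum_zeta (by omega)).congr_fun fun n => by
      simp [doubleTerm, diagEquiv, pow_add]
  have hdisj : Disjoint {q : ℕ × ℕ | q.2 < q.1} {q | q.2 = q.1} :=
    Set.disjoint_left.2 fun q h1 h2 => (ne_of_lt h1) h2
  have hunion : {q : ℕ × ℕ | q.2 < q.1} ∪ {q | q.2 = q.1} = {q | q.2 ≤ q.1} := by
    ext q
    simp only [Set.mem_union, Set.mem_ofPred_eq]
    omega
  have h := hlt.add_disjoint hdisj hdiag
  rw [hunion] at h
  exact h

theorem zetaStar_eq_dzeta_add_zeta (ha : 2 ≤ a) (hb : 1 ≤ b) :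
    zetaStar a b = dzeta a b + zeta (a + b) :=
  (hasSum_dzeta_add_zeta ha hb).tsum_eq

theorem hasSum_zetaStar (ha : 2 ≤ a) (hb : 1 ≤ b) :
    HasSum (fun q : {q : ℕ × ℕ // q.2 ≤ q.1} => doubleTerm a b q) (zetaStar a b) :=
  zetaStar_eq_dzeta_add_zeta ha hb ▸ hasSum_dzeta_add_zeta ha hb

theorem hasSum_zetaStar_fiberwise (ha : 2 ≤ a) (hb : 1 ≤ b) :
    HasSum (fun m : ℕ => ∑ n ∈ range (m + 1), doubleTerm a b (m, n)) (zetaStar a b) := by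
  refine (leEquiv.hasSum_iff.mpr (hasSum_zetaStar ha hb)).sigma fun m => ?_
  rw [← Fin.sum_univ_eq_sum_range (fun n => doubleTerm a b (m, n))]
  exact hasSum_fintype _

theorem zeta_mul_zeta (ha : 2 ≤ a) (hb : 2 ≤ b) :
    zeta a * zeta b = dzeta a b + dzeta b a + zeta (a + b) := by
  have hprod : HasSum (doubleTerm a b) (zeta a * zeta b) := by
    refine ((hasSum_zeta ha).mul (hasSum_zeta hb) ?_).congr_fun fun q => ?_
    · exact (summable_one_div_succ_pow ha).mul_of_nonneg (summable_one_div_succ_pow hb)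
        (fun _ => by positivity) fun _ => by positivity
    · exact (one_div_mul_one_div _ _).symm
  have hle : HasSum (doubleTerm a b ∘ (↑) : {q : ℕ × ℕ | q.2 ≤ q.1} → ℝ) (zetaStar a b) :=
    hasSum_zetaStar ha (by omega)
  have hgt : HasSum (doubleTerm a b ∘ (↑) : ({q : ℕ × ℕ | q.2 ≤ q.1}ᶜ : Set (ℕ × ℕ)) → ℝ)
      (dzeta b a) :=
    ((Equiv.prodComm ℕ ℕ).subtypeEquiv fun q => by simp).hasSum_iff.mp <|
      (hasSum_dzeta hb (by omega)).congr_fun fun q => by simp [doubleTerm, mul_comm]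
  rw [hprod.unique (hle.add_compl hgt), zetaStar_eq_dzeta_add_zeta ha (by omega)]
  ring

theorem sum_shiftedTerm_eq (hk : 2 ≤ k) (n d : ℕ) :
    ∑ a ∈ Icc 2 (k - 1), shiftedTerm a (k - a) (n, d) =
      1 / ((n : ℝ) + 1) ^ (k - 1) *
          ∑ j ∈ range (n + 1), (1 / ((d : ℝ) + ((j : ℝ) + 1)) - 1 / ((d : ℝ) + ((j : ℝ) + 1) + 1)) -
        shiftedTerm (k - 1) 1 (d, n) := by
  have htel : ∑ j ∈ range (n + 1),
      (1 / ((d : ℝ) + ((j : ℝ) + 1)) - 1 / ((d : ℝ) + ((j : ℝ) + 1) + 1)) =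
        1 / ((d : ℝ) + 1) - 1 / ((n : ℝ) + d + 2) := by
    convert sum_range_sub' (fun j : ℕ => 1 / ((d : ℝ) + ((j : ℝ) + 1))) (n + 1) using 1
    · push_cast; ring_nf
    · push_cast; ring_nf
  have hMN : (n : ℝ) + d + 2 - (n + 1) = d + 1 := by ring
  simp only [shiftedTerm]
  rw [htel, sum_one_div_pow_mul_pow (by positivity) (by positivity) (by rw [hMN]; positivity) hk,
    hMN]
  ring_nf

theorem sum_dzeta_eq_zeta (hk : 3 ≤ k) : ∑ a ∈ Icc 2 (k - 1), dzeta a (k - a) = zeta k := by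
  have hG : HasSum (fun p : ℕ × ℕ => 1 / ((p.1 : ℝ) + 1) ^ (k - 1) * ∑ j ∈ range (p.1 + 1),
      (1 / ((p.2 : ℝ) + ((j : ℝ) + 1)) - 1 / ((p.2 : ℝ) + ((j : ℝ) + 1) + 1)))
      (zetaStar (k - 1) 1) := by
    refine hasSum_prod_of_nonneg (fun p => ?_) (fun n => ?_)
      (hasSum_zetaStar_fiberwise (by omega) le_rfl)
    · refine mul_nonneg (by positivity) (sum_nonneg fun j _ => sub_nonneg.2 ?_)
      exact one_div_le_one_div_of_le (by positivity) (by linarith)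
    · rw [show ∑ j ∈ range (n + 1), doubleTerm (k - 1) 1 (n, j) =
          1 / ((n : ℝ) + 1) ^ (k - 1) * ∑ j ∈ range (n + 1), 1 / ((j : ℝ) + 1) by
        simp only [doubleTerm, mul_sum, pow_one, one_div_mul_one_div]]
      exact (hasSum_sum fun (j : ℕ) _ =>
        hasSum_one_div_add_sub ((j : ℝ) + 1) (by positivity)).mul_left _
  have hG' : HasSum (fun p : ℕ × ℕ => shiftedTerm (k - 1) 1 p.swap) (dzeta (k - 1) 1) :=
    (Equiv.prodComm ℕ ℕ).hasSum_iff.mpr (hasSum_shiftedTerm (by omega) le_rfl)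
  have hsum : HasSum (fun p => ∑ a ∈ Icc 2 (k - 1), shiftedTerm a (k - a) p)
      (∑ a ∈ Icc 2 (k - 1), dzeta a (k - a)) :=
    hasSum_sum fun a ha => by rw [mem_Icc] at ha; exact hasSum_shiftedTerm (by omega) (by omega)
  rw [hsum.unique ((hG.sub hG').congr_fun fun p => sum_shiftedTerm_eq (by omega) p.1 p.2),
    zetaStar_eq_dzeta_add_zeta (by omega) le_rfl, Nat.sub_add_cancel (by omega)]
  ring

theorem sum_zeta_mul_zeta_eq (hk : 3 ≤ k) :
    ∑ j ∈ Icc 2 (k - 2), zeta j * zeta (k - j) =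
      ((k : ℝ) + 1) * zeta k - 2 * zetaStar (k - 1) 1 := by
  have hstuffle : ∀ j ∈ Icc 2 (k - 2), zeta j * zeta (k - j) =
      dzeta j (k - j) + dzeta (k - j) j + zeta k := fun j hj => by
    rw [mem_Icc] at hj
    rw [zeta_mul_zeta (by omega) (by omega), Nat.add_sub_cancel' (by omega)]
  have hrefl : ∑ j ∈ Icc 2 (k - 2), dzeta (k - j) j = ∑ j ∈ Icc 2 (k - 2), dzeta j (k - j) := by
    rw [← sum_Icc_sub_reflect (fun j => dzeta j (k - j))]
    exact sum_congr rfl fun j hj => by rw [mem_Icc] at hj; rw [Nat.sub_sub_self (by omega)]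
  have hsum : ∑ j ∈ Icc 2 (k - 2), dzeta j (k - j) + dzeta (k - 1) 1 = zeta k := by
    have h := sum_Icc_succ_top (by omega : 2 ≤ k - 2 + 1) fun j => dzeta j (k - j)
    rw [show k - 2 + 1 = k - 1 by omega, show k - (k - 1) = 1 by omega] at h
    rw [← h, sum_dzeta_eq_zeta hk]
  rw [sum_congr rfl hstuffle, sum_add_distrib, sum_add_distrib, hrefl, sum_const, Nat.card_Icc,
    nsmul_eq_mul, zetaStar_eq_dzeta_add_zeta (by omega) le_rfl, Nat.sub_add_cancel (by omega),
    show k - 2 + 1 - 2 = k - 3 by omega, Nat.cast_sub hk]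
  linear_combination 2 * hsum

end MZV

/-- For odd `k ≥ 3`, `ζ*(k−1,1) = ((k+1)/2) ζ(k) − Σ_{2 ≤ j ≤ k−2, j odd} ζ(j) ζ(k−j)`. -/
theorem zetaStar_formula_odd (k : ℕ) (hk : Odd k) (h3 : 3 ≤ k) :
    zetaStar (k - 1) 1 =
      ((k : ℝ) + 1) / 2 * zeta k -
        ∑ j ∈ (Finset.Icc 2 (k - 2)).filter (fun j => Odd j), zeta j * zeta (k - j) := by
  have h := MZV.sum_zeta_mul_zeta_eq h3
  rw [MZV.sum_Icc_eq_two_nsmul_sum_filter_odd hk _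
    (fun j hj => by rw [Nat.sub_sub_self hj, mul_comm]), two_nsmul] at h
  linarith
end
end

section
/- Consequently, for any odd integer k ≥ 3, ζ*(k−1, 1) = ((k+1)/2) ζ(k) − Σ_{2 ≤ j ≤ k−2, j even} ζ(j) ζ(k−j). -/
open scoped BigOperators

noncomputable section

open Finset Filter Topology ENNReal

/-!
For `m > n ≥ 1` and `k ≥ 2` there is the partial-fraction identity
`∑_{j=2}^{k-1} 1/(m^j n^(k-j)) = 1/((m-n) m n^(k-2)) - 1/((m-n) m^(k-1))`.
Summed over `m > n`, the last term gives `ζ(k-1,1)` (substitute `n ↦ m - n`), and the middle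
one gives `ζ*(k-1,1) = ζ(k-1,1) + ζ(k)`, because `∑_{d ≥ 1} 1/(d (n+d)) = H_n / n` telescopes.
Cancelling the finite `ζ(k-1,1) ≤ ζ(2)` yields Euler's sum formula
`∑_{j=2}^{k-1} ζ(j,k-j) = ζ(k)`. Adding the stuffle relations
`ζ(j) ζ(k-j) = ζ(j,k-j) + ζ(k-j,j) + ζ(k)` for `2 ≤ j ≤ k-2` gives
`2 ζ*(k-1,1) + ∑_{j=2}^{k-2} ζ(j) ζ(k-j) = (k+1) ζ(k)`, and for odd `k` the reflection
`j ↦ k - j` exchanges the even and the odd terms of the sum.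

The series are summed in `ℝ≥0∞`, where they may be rearranged without any summability argument.
-/

theorem sum_Icc_one_div_pow_mul_pow {K : Type*} [Field K] {x y : K} (hx : x ≠ 0) (hy : y ≠ 0)
    (hxy : x ≠ y) {k : ℕ} (hk : 2 ≤ k) :
    ∑ j ∈ Icc 2 (k - 1), 1 / (x ^ j * y ^ (k - j)) =
      1 / ((x - y) * x * y ^ (k - 2)) - 1 / ((x - y) * x ^ (k - 1)) := by
  obtain ⟨N, rfl⟩ := Nat.exists_eq_add_of_le' hk
  clear hk
  simp only [Nat.add_sub_cancel, Nat.add_succ_sub_one]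
  induction N with
  | zero => simp
  | succ N ih =>
    have hstep : ∀ j ∈ Icc 2 (N + 1),
        1 / (x ^ j * y ^ (N + 1 + 2 - j)) = 1 / y * (1 / (x ^ j * y ^ (N + 2 - j))) := by
      intro j hj
      rw [show N + 1 + 2 - j = N + 2 - j + 1 by grind, pow_succ]
      field_simp
    rw [sum_Icc_succ_top (by omega), sum_congr rfl hstep, ← mul_sum, ih,
      show N + 1 + 2 - (N + 1 + 1) = 1 by omega]
    field_simp
    ring

theorem Antitone.hasSum_sub_add {f : ℕ → ℝ} (hf : Antitone f) (hf0 : Tendsto f atTop (𝓝 0))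
    (N : ℕ) : HasSum (fun d => f d - f (d + N)) (∑ i ∈ range N, f i) := by
  rw [hasSum_iff_tendsto_nat_of_nonneg fun d => sub_nonneg.2 (hf (d.le_add_right N))]
  have hpartial (D : ℕ) : ∑ d ∈ range D, (f d - f (d + N)) =
      ∑ i ∈ range N, f i - ∑ i ∈ range N, f (D + i) := by
    have h₁ := sum_range_add f D N
    have h₂ := sum_range_add f N D
    simp only [sum_sub_distrib, add_comm _ N] at h₁ h₂ ⊢
    linarith
  have htail : Tendsto (fun D => ∑ i ∈ range N, f (D + i)) atTop (𝓝 0) := by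
    simpa using tendsto_finsetSum (range N) fun i _ =>
      hf0.comp ((tendsto_add_atTop_nat i).congr fun D => rfl)
  simp_rw [hpartial]
  simpa using tendsto_const_nhds.sub htail

theorem tendsto_one_div_natCast_add (c : ℝ) :
    Tendsto (fun d : ℕ => 1 / ((d : ℝ) + c)) atTop (𝓝 0) :=
  tendsto_const_nhds.div_atTop (tendsto_atTop_add_const_right _ c tendsto_natCast_atTop_atTop)

theorem hasSum_one_div_mul_add (n : ℕ) :
    HasSum (fun d : ℕ => 1 / (((d : ℝ) + 1) * ((d : ℝ) + n + 2))) (harmonic (n + 1) / (n + 1)) := by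
  have hanti : Antitone fun d : ℕ => 1 / ((d : ℝ) + 1) := fun a b hab =>
    one_div_le_one_div_of_le (by positivity) (by gcongr)
  have h := (hanti.hasSum_sub_add (tendsto_one_div_natCast_add 1) (n + 1)).div_const ((n : ℝ) + 1)
  have hH : (harmonic (n + 1) : ℝ) = ∑ i ∈ range (n + 1), 1 / ((i : ℝ) + 1) := by simp [harmonic]
  rw [hH]
  refine h.congr_fun fun d => ?_
  push_cast
  field_simp
  ring

theorem sum_Icc_comp_sub {M : Type*} [AddCommMonoid M] (f : ℕ → M) (a k : ℕ) :
    ∑ j ∈ Icc a (k - a), f (k - j) = ∑ j ∈ Icc a (k - a), f j :=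
  sum_nbij' (k - ·) (k - ·) (by grind) (by grind) (by grind) (by grind) fun _ _ => rfl

theorem sum_Icc_eq_two_nsmul_sum_filter_even {M : Type*} [AddCommMonoid M] {k : ℕ} (hk : Odd k)
    (a : ℕ) (f : ℕ → M) (hf : ∀ j ≤ k, f (k - j) = f j) :
    ∑ j ∈ Icc a (k - a), f j = 2 • ∑ j ∈ (Icc a (k - a)).filter (fun j => Even j), f j := by
  rw [← sum_filter_add_sum_filter_not _ (fun j => Even j), two_nsmul]
  congr 1
  rw [sum_filter, sum_filter, ← sum_Icc_comp_sub]
  refine sum_congr rfl fun j hj => ?_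
  have hjk : j ≤ k := by grind
  simp [hf j hjk, Nat.even_sub hjk, Nat.not_even_iff_odd.2 hk]

theorem toReal_tsum_ofReal {α : Type*} {f : α → ℝ} (hf : ∀ a, 0 ≤ f a) :
    (∑' a, ENNReal.ofReal (f a)).toReal = ∑' a, f a := by
  rw [ENNReal.tsum_toReal_eq fun _ => ofReal_ne_top]
  exact tsum_congr fun a => toReal_ofReal (hf a)

theorem HasSum.tsum_ofReal_eq {α : Type*} {f : α → ℝ} {s : ℝ} (h : HasSum f s)
    (hf : ∀ a, 0 ≤ f a) : ∑' a, ENNReal.ofReal (f a) = ENNReal.ofReal s := by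
  rw [← ENNReal.ofReal_tsum_of_nonneg hf h.summable, h.tsum_eq]

section Rearrangement

variable (f : ℕ × ℕ → ℝ≥0∞)

theorem tsum_le_eq_tsum_lt_add_tsum_diag :
    ∑' q : {q : ℕ × ℕ // q.2 ≤ q.1}, f q =
      ∑' q : {q : ℕ × ℕ // q.2 < q.1}, f q + ∑' n, f (n, n) := by
  have hset : {q : ℕ × ℕ | q.2 ≤ q.1} = {q | q.2 < q.1} ∪ Set.range fun n => (n, n) := by
    ext ⟨m, n⟩
    simp [le_iff_lt_or_eq, eq_comm]
  have hdisj : Disjoint {q : ℕ × ℕ | q.2 < q.1} (Set.range fun n => (n, n)) := by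
    simp only [Set.disjoint_left, Set.mem_ofPred_eq, Set.mem_range, not_exists]
    rintro q hq n rfl
    exact lt_irrefl n hq
  calc _ = ∑' q : ↥({q : ℕ × ℕ | q.2 < q.1} ∪ Set.range fun n => (n, n)), f q :=
        tsum_congr_set_coe f hset
    _ = _ := by
      rw [ENNReal.summable.tsum_union_disjoint hdisj ENNReal.summable,
        tsum_range f (g := fun n : ℕ => (n, n)) fun a b h => congrArg Prod.fst h]
      rfl

theorem tsum_eq_tsum_le_add_tsum_lt_swap :
    ∑' q, f q = ∑' q : {q : ℕ × ℕ // q.2 ≤ q.1}, f q +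
      ∑' q : {q : ℕ × ℕ // q.2 < q.1}, f q.1.swap := by
  rw [← ENNReal.summable.tsum_add_tsum_compl (s := {q : ℕ × ℕ | q.2 ≤ q.1}) ENNReal.summable]
  congr 1
  let e : ({q : ℕ × ℕ | q.2 ≤ q.1}ᶜ : Set (ℕ × ℕ)) ≃ {q : ℕ × ℕ // q.2 < q.1} :=
    Equiv.subtypeEquiv (Equiv.prodComm ℕ ℕ) fun q => not_le (a := q.2) (b := q.1)
  exact e.tsum_eq fun q => f q.1.swap

theorem tsum_lt_eq_tsum_tsum_add :
    ∑' q : {q : ℕ × ℕ // q.2 < q.1}, f q = ∑' (n : ℕ) (d : ℕ), f (n + d + 1, n) := by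
  let e : ℕ × ℕ ≃ {q : ℕ × ℕ // q.2 < q.1} :=
    { toFun := fun p => ⟨(p.1 + p.2 + 1, p.1), by simp only; omega⟩
      invFun := fun q => (q.1.2, q.1.1 - q.1.2 - 1)
      left_inv := fun p => by ext <;> simp; omega
      right_inv := fun q => by ext <;> simp; omega }
  rw [← e.tsum_eq, ENNReal.tsum_prod']
  rfl

theorem tsum_le_eq_tsum_sum_range :
    ∑' q : {q : ℕ × ℕ // q.2 ≤ q.1}, f q = ∑' m, ∑ i ∈ range (m + 1), f (m, i) := by
  let e : (Σ m : ℕ, range (m + 1)) ≃ {q : ℕ × ℕ // q.2 ≤ q.1} :=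
    { toFun := fun p => ⟨(p.1, p.2), Nat.lt_succ_iff.1 (mem_range.1 p.2.2)⟩
      invFun := fun q => ⟨q.1.1, q.1.2, mem_range.2 (Nat.lt_succ_of_le q.2)⟩ }
  rw [← e.tsum_eq, ENNReal.tsum_sigma']
  exact tsum_congr fun m => Finset.tsum_subtype (range (m + 1)) fun i => f (m, i)

theorem tsum_lt_comp_reflect :
    ∑' q : {q : ℕ × ℕ // q.2 < q.1}, f (q.1.1, q.1.1 - q.1.2 - 1) =
      ∑' q : {q : ℕ × ℕ // q.2 < q.1}, f q := by
  let e : {q : ℕ × ℕ // q.2 < q.1} ≃ {q : ℕ × ℕ // q.2 < q.1} :=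
    { toFun := fun q => ⟨(q.1.1, q.1.1 - q.1.2 - 1), by have := q.2; simp only; omega⟩
      invFun := fun q => ⟨(q.1.1, q.1.1 - q.1.2 - 1), by have := q.2; simp only; omega⟩
      left_inv := fun q => by have := q.2; ext <;> simp; omega
      right_inv := fun q => by have := q.2; ext <;> simp; omega }
  exact e.tsum_eq (f ∘ (↑))

end Rearrangement

/- A pair `(m, n)` stands for `(m + 1, n + 1)`, as in `zetaStar`; so `gapTerm a b (m, n)` is the
term `1/((m-n) m^a n^b)` of the partial-fraction identity. -/
def zetaTerm (a b : ℕ) (q : ℕ × ℕ) : ℝ≥0∞ :=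
  ENNReal.ofReal (1 / (((q.1 : ℝ) + 1) ^ a * ((q.2 : ℝ) + 1) ^ b))

def gapTerm (a b : ℕ) (q : ℕ × ℕ) : ℝ≥0∞ :=
  ENNReal.ofReal (1 / (((q.1 : ℝ) - q.2) * ((q.1 : ℝ) + 1) ^ a * ((q.2 : ℝ) + 1) ^ b))

def eZeta (s : ℕ) : ℝ≥0∞ := ∑' n : ℕ, ENNReal.ofReal (1 / ((n : ℝ) + 1) ^ s)

def eDZeta (a b : ℕ) : ℝ≥0∞ := ∑' q : {q : ℕ × ℕ // q.2 < q.1}, zetaTerm a b q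

def eZetaStar (a b : ℕ) : ℝ≥0∞ := ∑' q : {q : ℕ × ℕ // q.2 ≤ q.1}, zetaTerm a b q

theorem eZeta_toReal (s : ℕ) : (eZeta s).toReal = zeta s :=
  toReal_tsum_ofReal fun _ => by positivity

theorem eZetaStar_toReal (a b : ℕ) : (eZetaStar a b).toReal = zetaStar a b :=
  toReal_tsum_ofReal fun _ => by positivity

theorem eZeta_ne_top {s : ℕ} (hs : 2 ≤ s) : eZeta s ≠ ⊤ := by
  have h := (summable_nat_add_iff 1).2 (Real.summable_one_div_nat_pow.2 hs)
  push_cast at h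
  exact h.tsum_ofReal_ne_top

theorem eZetaStar_eq_eDZeta_add_eZeta (a b : ℕ) :
    eZetaStar a b = eDZeta a b + eZeta (a + b) := by
  rw [eZetaStar, tsum_le_eq_tsum_lt_add_tsum_diag, eDZeta, eZeta]
  simp only [zetaTerm, pow_add]

theorem eZeta_mul_eZeta (a b : ℕ) : eZeta a * eZeta b = eZetaStar a b + eDZeta b a := by
  have hprod : eZeta a * eZeta b = ∑' q : ℕ × ℕ, zetaTerm a b q := by
    rw [ENNReal.tsum_prod', eZeta, eZeta, ← ENNReal.tsum_mul_right]
    refine tsum_congr fun m => ?_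
    rw [← ENNReal.tsum_mul_left]
    refine tsum_congr fun n => ?_
    rw [zetaTerm, ← ENNReal.ofReal_mul (by positivity), one_div_mul_one_div]
  rw [hprod, tsum_eq_tsum_le_add_tsum_lt_swap, eZetaStar, eDZeta]
  simp only [zetaTerm, Prod.fst_swap, Prod.snd_swap, mul_comm]

theorem tsum_zetaTerm_add_succ_le {a : ℕ} (ha : 2 ≤ a) (n : ℕ) :
    ∑' d, zetaTerm a 1 (n + d + 1, n) ≤ ENNReal.ofReal (1 / ((n : ℝ) + 1) ^ 2) := by
  set g : ℕ → ℝ := fun d => 1 / ((d : ℝ) + (n + 1))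
  have hg : Antitone g := fun a b hab =>
    one_div_le_one_div_of_le (by positivity) (by gcongr)
  have hsum := (hg.hasSum_sub_add (tendsto_one_div_natCast_add _) 1).mul_left (1 / ((n : ℝ) + 1))
  calc ∑' d, zetaTerm a 1 (n + d + 1, n)
      ≤ ∑' d, ENNReal.ofReal (1 / ((n : ℝ) + 1) * (g d - g (d + 1))) := by
        refine ENNReal.tsum_le_tsum fun d => ENNReal.ofReal_le_ofReal ?_
        have hx : (1 : ℝ) ≤ n + d + 2 := by
          linarith [(n.cast_nonneg : (0 : ℝ) ≤ n), (d.cast_nonneg : (0 : ℝ) ≤ d)]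
        have htel : 1 / ((n : ℝ) + 1) * (g d - g (d + 1)) =
            1 / (((n : ℝ) + 1) * (((n : ℝ) + d + 1) * ((n : ℝ) + d + 2))) := by
          simp only [g]
          push_cast
          field_simp
          ring
        rw [htel]
        refine one_div_le_one_div_of_le (by positivity) ?_
        push_cast
        calc ((n : ℝ) + 1) * (((n : ℝ) + d + 1) * ((n : ℝ) + d + 2))
            ≤ ((n : ℝ) + d + 2) ^ 2 * ((n : ℝ) + 1) ^ 1 := by nlinarith
          _ ≤ ((n : ℝ) + d + 1 + 1) ^ a * ((n : ℝ) + 1) ^ 1 := by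
            rw [add_assoc _ (1 : ℝ) 1, one_add_one_eq_two]
            gcongr
    _ = ENNReal.ofReal (1 / ((n : ℝ) + 1) ^ 2) := by
        rw [hsum.tsum_ofReal_eq fun d => mul_nonneg (by positivity)
          (sub_nonneg.2 (hg (d.le_add_right 1)))]
        simp [g, sq]

theorem eDZeta_le_eZeta_two {a : ℕ} (ha : 2 ≤ a) : eDZeta a 1 ≤ eZeta 2 := by
  rw [eDZeta, tsum_lt_eq_tsum_tsum_add]
  exact ENNReal.tsum_le_tsum (tsum_zetaTerm_add_succ_le ha)

theorem tsum_gapTerm_zero (a : ℕ) :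
    ∑' q : {q : ℕ × ℕ // q.2 < q.1}, gapTerm a 0 q = eDZeta a 1 := by
  rw [eDZeta, ← tsum_lt_comp_reflect]
  refine tsum_congr fun ⟨⟨m, n⟩, (h : n < m)⟩ => ?_
  have hcast : (m : ℝ) - (m - n - 1 : ℕ) = n + 1 := by
    rw [Nat.sub_sub, Nat.cast_sub h]
    push_cast
    ring
  simp only [gapTerm, zetaTerm, hcast]
  ring_nf

theorem tsum_gapTerm_one (a : ℕ) :
    ∑' q : {q : ℕ × ℕ // q.2 < q.1}, gapTerm 1 a q = eZetaStar (a + 1) 1 := by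
  rw [tsum_lt_eq_tsum_tsum_add, eZetaStar, tsum_le_eq_tsum_sum_range]
  refine tsum_congr fun n => ?_
  have hinner := (hasSum_one_div_mul_add n).mul_left (1 / ((n : ℝ) + 1) ^ a)
  calc _ = ∑' d : ℕ, ENNReal.ofReal
        (1 / ((n : ℝ) + 1) ^ a * (1 / (((d : ℝ) + 1) * ((d : ℝ) + n + 2)))) := by
        refine tsum_congr fun d => ?_
        rw [gapTerm, one_div_mul_one_div]
        push_cast
        ring_nf
    _ = _ := by
        rw [hinner.tsum_ofReal_eq fun d => by positivity]
        simp only [zetaTerm]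
        rw [← ENNReal.ofReal_sum_of_nonneg fun i _ => by positivity]
        refine congrArg ENNReal.ofReal ?_
        simp only [harmonic, Rat.cast_sum, Rat.cast_inv, Rat.cast_natCast, sum_div, mul_sum]
        refine sum_congr rfl fun i _ => ?_
        push_cast
        field_simp
        ring

theorem sum_zetaTerm_add_gapTerm {k m n : ℕ} (hk : 2 ≤ k) (h : n < m) :
    ∑ j ∈ Icc 2 (k - 1), zetaTerm j (k - j) (m, n) + gapTerm (k - 1) 0 (m, n) =
      gapTerm 1 (k - 2) (m, n) := by
  have key := sum_Icc_one_div_pow_mul_pow (x := (m : ℝ) + 1) (y := (n : ℝ) + 1) (by positivity)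
    (by positivity) (by simpa using h.ne') hk
  have hmn : (0 : ℝ) < m - n := sub_pos.2 (Nat.cast_lt.2 h)
  rw [add_sub_add_right_eq_sub] at key
  simp only [zetaTerm, gapTerm, pow_zero, pow_one, mul_one]
  rw [← ENNReal.ofReal_sum_of_nonneg fun j _ => by positivity,
    ← ENNReal.ofReal_add (sum_nonneg fun j _ => by positivity) (by positivity), key, sub_add_cancel]

theorem sum_eDZeta_add_eDZeta {k : ℕ} (hk : 2 ≤ k) :
    ∑ j ∈ Icc 2 (k - 1), eDZeta j (k - j) + eDZeta (k - 1) 1 = eZetaStar (k - 1) 1 := by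
  calc _ = ∑' q : {q : ℕ × ℕ // q.2 < q.1},
        (∑ j ∈ Icc 2 (k - 1), zetaTerm j (k - j) q + gapTerm (k - 1) 0 q) := by
        rw [ENNReal.tsum_add, tsum_gapTerm_zero,
          Summable.tsum_finsetSum fun _ _ => ENNReal.summable]
        rfl
    _ = ∑' q : {q : ℕ × ℕ // q.2 < q.1}, gapTerm 1 (k - 2) q :=
        tsum_congr fun q => sum_zetaTerm_add_gapTerm hk q.2
    _ = _ := by rw [tsum_gapTerm_one, show k - 2 + 1 = k - 1 by omega]

theorem sum_eDZeta_eq_eZeta {k : ℕ} (hk : 3 ≤ k) :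
    ∑ j ∈ Icc 2 (k - 1), eDZeta j (k - j) = eZeta k := by
  have hfin : eDZeta (k - 1) 1 ≠ ⊤ :=
    ne_top_of_le_ne_top (eZeta_ne_top le_rfl) (eDZeta_le_eZeta_two (by omega))
  have h := sum_eDZeta_add_eDZeta (k := k) (by omega)
  rw [eZetaStar_eq_eDZeta_add_eZeta, Nat.sub_add_cancel (by omega), add_comm] at h
  exact (ENNReal.add_right_inj hfin).1 h

theorem two_mul_eZetaStar_add_sum {k : ℕ} (hk : 3 ≤ k) :
    2 * eZetaStar (k - 1) 1 + ∑ j ∈ Icc 2 (k - 2), eZeta j * eZeta (k - j) =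
      ((k : ℝ≥0∞) + 1) * eZeta k := by
  set S := ∑ j ∈ Icc 2 (k - 2), eDZeta j (k - j)
  have hsum : S + eDZeta (k - 1) 1 = eZeta k := by
    rw [← sum_eDZeta_eq_eZeta hk, show k - 1 = k - 2 + 1 by omega, sum_Icc_succ_top (by omega),
      show k - (k - 2 + 1) = 1 by omega]
  have hstar : eZetaStar (k - 1) 1 = eDZeta (k - 1) 1 + eZeta k := by
    rw [eZetaStar_eq_eDZeta_add_eZeta, Nat.sub_add_cancel (by omega)]
  have hprod : ∑ j ∈ Icc 2 (k - 2), eZeta j * eZeta (k - j) = 2 * S + (k - 3 : ℕ) * eZeta k := by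
    have hreflect : ∑ j ∈ Icc 2 (k - 2), eDZeta (k - j) j = S := by
      rw [← sum_Icc_comp_sub]
      exact sum_congr rfl fun j hj => by rw [Nat.sub_sub_self (by grind)]
    rw [sum_congr rfl fun j hj => by
      rw [eZeta_mul_eZeta, eZetaStar_eq_eDZeta_add_eZeta, Nat.add_sub_cancel' (by grind)]]
    rw [sum_add_distrib, sum_add_distrib, hreflect, sum_const, Nat.card_Icc, nsmul_eq_mul,
      show k - 2 + 1 - 2 = k - 3 by omega]
    ring
  rw [hprod, hstar]
  calc 2 * (eDZeta (k - 1) 1 + eZeta k) + (2 * S + (k - 3 : ℕ) * eZeta k)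
      = 2 * (S + eDZeta (k - 1) 1) + ((k - 3 : ℕ) + 2) * eZeta k := by ring
    _ = ((k : ℝ≥0∞) + 1) * eZeta k := by
      rw [hsum, ← add_mul]
      congr 1
      norm_cast
      omega

theorem two_mul_zetaStar_add_sum {k : ℕ} (hk : 3 ≤ k) :
    2 * zetaStar (k - 1) 1 + ∑ j ∈ Icc 2 (k - 2), zeta j * zeta (k - j) = (k + 1) * zeta k := by
  have h := two_mul_eZetaStar_add_sum hk
  have hfin : ((k : ℝ≥0∞) + 1) * eZeta k ≠ ⊤ := mul_ne_top (by simp) (eZeta_ne_top (by omega))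
  rw [← h] at hfin
  obtain ⟨hstar, hprod⟩ := add_ne_top.1 hfin
  have hreal := congrArg ENNReal.toReal h
  rw [toReal_add hstar hprod, toReal_sum fun j hj => (sum_ne_top.1 hprod) j hj] at hreal
  simpa [eZeta_toReal, eZetaStar_toReal, toReal_add] using hreal

/-- For odd `k ≥ 3`, `ζ*(k−1,1) = ((k+1)/2) ζ(k) − Σ_{2 ≤ j ≤ k−2, j even} ζ(j) ζ(k−j)`. -/
theorem zetaStar_formula_even (k : ℕ) (hk : Odd k) (h3 : 3 ≤ k) :
    zetaStar (k - 1) 1 =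
      ((k : ℝ) + 1) / 2 * zeta k -
        ∑ j ∈ (Finset.Icc 2 (k - 2)).filter (fun j => Even j), zeta j * zeta (k - j) := by
  have h := two_mul_zetaStar_add_sum h3
  rw [sum_Icc_eq_two_nsmul_sum_filter_even hk 2 (fun j => zeta j * zeta (k - j))
    fun j hj => by rw [Nat.sub_sub_self hj, mul_comm], two_nsmul] at h
  linarith
end
end

section
/- ζ*(5,1) = ζ(2)ζ(4) − (1/2) ζ(3)², where ζ*(a,b) = Σ_{m ≥ n ≥ 1} m^{−a} n^{−b}. -/
open scoped BigOperators

noncomputable section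

/-! Write `ζ*(5,1) = ζ(5,1) + ζ(6)`. The products `ζ(2)ζ(4)` and `ζ(3)²` can be expanded into
double zeta values of weight 6 in two ways: by splitting `Σ_{m,n}` into `m > n`, `m < n` and
`m = n` (the stuffle product), and by the partial fraction decomposition of `1/(x^a y^b)` in
powers of `1/x`, `1/y`, `1/(x+y)` (Euler's decomposition). Comparing the two gives four linear
relations among `ζ(4,2)`, `ζ(2,4)`, `ζ(3,3)`, `ζ(5,1)`, `ζ(6)` and the two products, which
together with `ζ(2)ζ(4) = 7/4 ζ(6)` (from Euler's evaluation of `ζ(2k)`) force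
`ζ(5,1) = 3/4 ζ(6) - 1/2 ζ(3)²`. -/

def doubleZetaTerm (a b : ℕ) (q : ℕ × ℕ) : ℝ :=
  1 / (((q.1 : ℝ) + 1) ^ a * ((q.2 : ℝ) + 1) ^ b)

lemma summable_one_div_nat_add_one_pow {s : ℕ} (hs : 2 ≤ s) :
    Summable (fun n : ℕ => 1 / ((n : ℝ) + 1) ^ s) := by
  have := (summable_nat_add_iff 1).2 (Real.summable_one_div_nat_pow.2 (by omega : 1 < s))
  simpa only [Nat.cast_add, Nat.cast_one] using this

lemma hasSum_zeta {s : ℕ} (hs : 2 ≤ s) :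
    HasSum (fun n : ℕ => 1 / ((n : ℝ) + 1) ^ s) (zeta s) :=
  (summable_one_div_nat_add_one_pow hs).hasSum

lemma zeta_eq_of_hasSum {s : ℕ} (hs : s ≠ 0) {A : ℝ}
    (h : HasSum (fun n : ℕ => 1 / (n : ℝ) ^ s) A) : zeta s = A := by
  rw [← hasSum_nat_add_iff' 1] at h
  simp only [Finset.range_one, Finset.sum_singleton, Nat.cast_zero, zero_pow hs, div_zero,
    sub_zero, Nat.cast_add, Nat.cast_one] at h
  exact h.tsum_eq

lemma zeta_two_mul_zeta_four_eq_zeta_six : zeta 2 * zeta 4 = 7 / 4 * zeta 6 := by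
  have h6 := hasSum_zeta_nat (k := 3) (by norm_num)
  rw [show bernoulli 6 = 1 / 42 by decide +kernel] at h6
  rw [zeta_eq_of_hasSum two_ne_zero hasSum_zeta_two,
    zeta_eq_of_hasSum four_ne_zero hasSum_zeta_four, zeta_eq_of_hasSum (by norm_num) h6]
  norm_num [Nat.factorial]
  ring

lemma hasSum_doubleZetaTerm {a b : ℕ} (ha : 2 ≤ a) (hb : 2 ≤ b) :
    HasSum (doubleZetaTerm a b) (zeta a * zeta b) := by
  have hprod := (hasSum_zeta ha).mul (hasSum_zeta hb)
    ((summable_one_div_nat_add_one_pow ha).mul_of_nonneg (summable_one_div_nat_add_one_pow hb)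
      (fun _ => by positivity) (fun _ => by positivity))
  simp only [div_mul_div_comm, one_mul] at hprod
  exact hprod

def belowDiagEquiv : ℕ × ℕ ≃ {q : ℕ × ℕ // q.2 < q.1} where
  toFun p := ⟨(p.1 + p.2 + 1, p.1), by simp only; omega⟩
  invFun q := (q.1.2, q.1.1 - q.1.2 - 1)
  left_inv p := by ext <;> simp only; omega
  right_inv q := by obtain ⟨⟨m, n⟩, h⟩ := q; ext <;> simp only at h ⊢; omega

lemma natCast_add_add_one_add_one (j k : ℕ) :
    ((j + k + 1 : ℕ) : ℝ) + 1 = ((j : ℝ) + 1) + ((k : ℝ) + 1) := by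
  push_cast
  ring

lemma sq_mul_sq_le_add_pow_mul_pow {x y : ℝ} (hx : 1 ≤ x) (hy : 0 ≤ y) {a b : ℕ} (ha : 2 ≤ a)
    (hb : 1 ≤ b) (hab : 4 ≤ a + b) : x ^ 2 * y ^ 2 ≤ (x + y) ^ a * x ^ b := by
  have hxy : 1 ≤ x + y := by linarith
  have hy2 : y ^ 2 ≤ (x + y) ^ 2 := by gcongr; linarith
  rcases Nat.lt_or_ge b 2 with hb1 | hb2
  · obtain rfl : b = 1 := by omega
    calc x ^ 2 * y ^ 2 = x * y ^ 2 * x := by ring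
      _ ≤ (x + y) * (x + y) ^ 2 * x := by gcongr; linarith
      _ = (x + y) ^ 3 * x ^ 1 := by ring
      _ ≤ (x + y) ^ a * x ^ 1 := by gcongr; omega
  · calc x ^ 2 * y ^ 2 = y ^ 2 * x ^ 2 := mul_comm _ _
      _ ≤ (x + y) ^ 2 * x ^ 2 := by gcongr
      _ ≤ (x + y) ^ a * x ^ b :=
        mul_le_mul (pow_le_pow_right₀ hxy ha) (pow_le_pow_right₀ hx hb2) (by positivity)
          (by positivity)

lemma summable_dzeta {a b : ℕ} (ha : 2 ≤ a) (hb : 1 ≤ b) (hab : 4 ≤ a + b) :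
    Summable (fun q : {q : ℕ × ℕ // q.2 < q.1} => doubleZetaTerm a b q) := by
  rw [← belowDiagEquiv.summable_iff]
  refine (hasSum_doubleZetaTerm le_rfl le_rfl).summable.of_nonneg_of_le
    (fun _ => by simp only [Function.comp_apply, doubleZetaTerm]; positivity) fun p => ?_
  have hx : (1 : ℝ) ≤ p.1 + 1 := by simp
  have hy : (0 : ℝ) ≤ p.2 + 1 := by positivity
  simp only [Function.comp_apply, belowDiagEquiv, Equiv.coe_fn_mk, doubleZetaTerm,
    natCast_add_add_one_add_one]
  exact one_div_le_one_div_of_le (by positivity) (sq_mul_sq_le_add_pow_mul_pow hx hy ha hb hab)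

lemma hasSum_dzeta_grid {a b : ℕ} (ha : 2 ≤ a) (hb : 1 ≤ b) (hab : 4 ≤ a + b) :
    HasSum (fun p : ℕ × ℕ => doubleZetaTerm a b (p.1 + p.2 + 1, p.1)) (dzeta a b) :=
  belowDiagEquiv.hasSum_iff.2 (summable_dzeta ha hb hab).hasSum

lemma hasSum_dzeta_grid_swap {a b : ℕ} (ha : 2 ≤ a) (hb : 1 ≤ b) (hab : 4 ≤ a + b) :
    HasSum (fun p : ℕ × ℕ => doubleZetaTerm a b (p.1 + p.2 + 1, p.2)) (dzeta a b) := by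
  rw [← (Equiv.prodComm ℕ ℕ).hasSum_iff]
  convert hasSum_dzeta_grid ha hb hab using 3 with p
  simp only [Function.comp_apply, Equiv.prodComm_apply, Prod.fst_swap, Prod.snd_swap, add_comm]

lemma zetaStar_eq_dzeta_add_zeta {a b : ℕ} (ha : 2 ≤ a) (hb : 1 ≤ b) (hab : 4 ≤ a + b) :
    zetaStar a b = dzeta a b + zeta (a + b) := by
  have hbelow : HasSum (doubleZetaTerm a b ∘ (↑) : {q : ℕ × ℕ | q.2 < q.1} → ℝ) (dzeta a b) :=
    (summable_dzeta ha hb hab).hasSum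
  have hdiag : HasSum (doubleZetaTerm a b ∘ (↑) : Set.range (fun n : ℕ => (n, n)) → ℝ)
      (zeta (a + b)) := by
    have hinj : Function.Injective fun n : ℕ => (n, n) := fun m n h => congrArg Prod.fst h
    refine hinj.hasSum_range_iff.2 ?_
    convert hasSum_zeta (s := a + b) (by omega) using 2 with n
    simp only [Function.comp_apply, doubleZetaTerm, ← pow_add]
  have hdisj : Disjoint {q : ℕ × ℕ | q.2 < q.1} (Set.range fun n => (n, n)) := by
    rw [Set.disjoint_left]
    rintro q hq ⟨n, rfl⟩
    exact lt_irrefl n hq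
  have hunion : {q : ℕ × ℕ | q.2 < q.1} ∪ Set.range (fun n => (n, n)) = {q | q.2 ≤ q.1} := by
    ext ⟨m, n⟩
    simp only [Set.mem_union, Set.mem_ofPred_eq, Set.mem_range, Prod.mk.injEq]
    constructor
    · rintro (h | ⟨k, rfl, rfl⟩) <;> omega
    · intro h
      rcases h.lt_or_eq with h | rfl
      · exact Or.inl h
      · exact Or.inr ⟨n, rfl, rfl⟩
  rw [← (hbelow.add_disjoint hdisj hdiag).tsum_eq]
  exact tsum_congr_set_coe (doubleZetaTerm a b) hunion.symm

lemma zeta_mul_zeta {a b : ℕ} (ha : 2 ≤ a) (hb : 2 ≤ b) :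
    zeta a * zeta b = dzeta a b + dzeta b a + zeta (a + b) := by
  have hprod := hasSum_doubleZetaTerm ha hb
  let swapEquiv : {q : ℕ × ℕ // q.2 ≤ q.1} ≃ ({q : ℕ × ℕ | q.2 < q.1}ᶜ : Set (ℕ × ℕ)) :=
    (Equiv.prodComm ℕ ℕ).subtypeEquiv fun q => by simp
  have habove : ∑' q : ({q : ℕ × ℕ | q.2 < q.1}ᶜ : Set (ℕ × ℕ)), doubleZetaTerm a b q =
      zetaStar b a := by
    rw [← swapEquiv.tsum_eq]
    exact tsum_congr fun q => by simp [swapEquiv, doubleZetaTerm, mul_comm]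
  rw [← hprod.tsum_eq, ← hprod.summable.tsum_subtype_add_tsum_subtype_compl {q | q.2 < q.1},
    habove, zetaStar_eq_dzeta_add_zeta hb (by omega) (by omega), add_comm b a, ← add_assoc]
  rfl

lemma partialFraction_two_four {x y : ℝ} (hx : x ≠ 0) (hy : y ≠ 0) (hxy : x + y ≠ 0) :
    1 / (x ^ 2 * y ^ 4) =
      1 / ((x + y) ^ 4 * x ^ 2) + 4 * (1 / ((x + y) ^ 5 * x ^ 1)) +
        (1 / ((x + y) ^ 2 * y ^ 4) + 2 * (1 / ((x + y) ^ 3 * y ^ 3)) +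
          3 * (1 / ((x + y) ^ 4 * y ^ 2)) + 4 * (1 / ((x + y) ^ 5 * y ^ 1))) := by
  field_simp
  ring

lemma partialFraction_three_three {x y : ℝ} (hx : x ≠ 0) (hy : y ≠ 0) (hxy : x + y ≠ 0) :
    1 / (x ^ 3 * y ^ 3) =
      1 / ((x + y) ^ 3 * x ^ 3) + 3 * (1 / ((x + y) ^ 4 * x ^ 2)) +
        6 * (1 / ((x + y) ^ 5 * x ^ 1)) +
        (1 / ((x + y) ^ 3 * y ^ 3) + 3 * (1 / ((x + y) ^ 4 * y ^ 2)) +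
          6 * (1 / ((x + y) ^ 5 * y ^ 1))) := by
  field_simp
  ring

lemma zeta_two_mul_zeta_four_eq_sum_dzeta :
    zeta 2 * zeta 4 = dzeta 4 2 + 4 * dzeta 5 1 +
      (dzeta 2 4 + 2 * dzeta 3 3 + 3 * dzeta 4 2 + 4 * dzeta 5 1) := by
  refine (hasSum_doubleZetaTerm le_rfl (by norm_num)).unique ?_
  have hx := (hasSum_dzeta_grid (a := 4) (b := 2) (by norm_num) (by norm_num) (by norm_num)).add
    ((hasSum_dzeta_grid (a := 5) (b := 1) (by norm_num) le_rfl (by norm_num)).mul_left 4)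
  have hy :=
    (((hasSum_dzeta_grid_swap (a := 2) (b := 4) le_rfl (by norm_num) (by norm_num)).add
      ((hasSum_dzeta_grid_swap (a := 3) (b := 3) (by norm_num) (by norm_num)
        (by norm_num)).mul_left 2)).add
      ((hasSum_dzeta_grid_swap (a := 4) (b := 2) (by norm_num) (by norm_num)
        (by norm_num)).mul_left 3)).add
      ((hasSum_dzeta_grid_swap (a := 5) (b := 1) (by norm_num) le_rfl
        (by norm_num)).mul_left 4)
  convert hx.add hy using 1
  funext p
  simp only [doubleZetaTerm, natCast_add_add_one_add_one]
  exact partialFraction_two_four (by positivity) (by positivity) (by positivity)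

lemma zeta_three_mul_zeta_three_eq_sum_dzeta :
    zeta 3 * zeta 3 = dzeta 3 3 + 3 * dzeta 4 2 + 6 * dzeta 5 1 +
      (dzeta 3 3 + 3 * dzeta 4 2 + 6 * dzeta 5 1) := by
  refine (hasSum_doubleZetaTerm (by norm_num) (by norm_num)).unique ?_
  have hx :=
    ((hasSum_dzeta_grid (a := 3) (b := 3) (by norm_num) (by norm_num) (by norm_num)).add
      ((hasSum_dzeta_grid (a := 4) (b := 2) (by norm_num) (by norm_num)
        (by norm_num)).mul_left 3)).add
      ((hasSum_dzeta_grid (a := 5) (b := 1) (by norm_num) le_rfl (by norm_num)).mul_left 6)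
  have hy :=
    ((hasSum_dzeta_grid_swap (a := 3) (b := 3) (by norm_num) (by norm_num) (by norm_num)).add
      ((hasSum_dzeta_grid_swap (a := 4) (b := 2) (by norm_num) (by norm_num)
        (by norm_num)).mul_left 3)).add
      ((hasSum_dzeta_grid_swap (a := 5) (b := 1) (by norm_num) le_rfl
        (by norm_num)).mul_left 6)
  convert hx.add hy using 1
  funext p
  simp only [doubleZetaTerm, natCast_add_add_one_add_one]
  exact partialFraction_three_three (by positivity) (by positivity) (by positivity)

/-- `ζ*(5,1) = ζ(2)ζ(4) − (1/2)ζ(3)²`. -/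
theorem zetaStar_five_one : zetaStar 5 1 = zeta 2 * zeta 4 - 1 / 2 * zeta 3 ^ 2 := by
  have hstar := zetaStar_eq_dzeta_add_zeta (a := 5) (b := 1) (by norm_num) le_rfl (by norm_num)
  have stuffle24 := zeta_mul_zeta (a := 2) (b := 4) le_rfl (by norm_num)
  have stuffle33 := zeta_mul_zeta (a := 3) (b := 3) (by norm_num) (by norm_num)
  have euler24 := zeta_two_mul_zeta_four_eq_sum_dzeta
  have euler33 := zeta_three_mul_zeta_three_eq_sum_dzeta
  have hζ6 := zeta_two_mul_zeta_four_eq_zeta_six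
  simp only [Nat.reduceAdd] at hstar stuffle24 stuffle33
  rw [hstar, sq]
  linarith
end
end
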